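/- arXiv:1409.7542 — 2 statements merged into one kernel-verified Lean document; each statement's English description precedes it below -/
import Mathlib

section
/- Let σ : S → A be a ∼-strategy between essps. Then σ̃ : S̃ → Ã, the induced map between the symmetry event structures (with polarities inherited via left projection and with the higher isomorphism families), is itself a ∼-strategy: it is courteous, strong-receptive, and S̃ is thin. -/
set_option autoImplicit false
set_option maxHeartbeats 1000000

universe u

/-- An event structure. -/
structure ES (E : Type u) where
  le : E → E → Prop
  le_refl : ∀ e, le e e
  le_trans : ∀ {a b c}, le a b → le b c → le a c
  le_antisymm : ∀ {a b}, le a b → le b a → a = b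
  Con : Set (Set E)
  con_empty : (∅ : Set E) ∈ Con
  causes_finite : ∀ e, {e' | le e' e}.Finite
  con_finite : ∀ X ∈ Con, Set.Finite X
  con_singleton : ∀ e, ({e} : Set E) ∈ Con
  con_mono : ∀ {X Y : Set E}, Y ⊆ X → X ∈ Con → Y ∈ Con
  con_extend : ∀ {X : Set E} {e e' : E}, X ∈ Con → le e e' → e' ∈ X → X ∪ {e} ∈ Con

variable {E F G H : Type u}

/-- Configurations: finite (via `Con`), consistent, down-closed subsets. -/
def Config (A : ES E) (x : Set E) : Prop :=
  x ∈ A.Con ∧ ∀ ⦃e : E⦄, e ∈ x → ∀ ⦃e' : E⦄, A.le e' e → e' ∈ x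

/-- Covering: `x —⊂ e`. -/
def Cov (A : ES E) (x : Set E) (e : E) : Prop :=
  Config A x ∧ e ∉ x ∧ Config A (insert e x)

def ESlt (A : ES E) (e e' : E) : Prop := A.le e e' ∧ e ≠ e'

/-- Immediate causality `e ⋖ e'`. -/
def Imm (A : ES E) (e e' : E) : Prop :=
  ESlt A e e' ∧ ∀ e'', ESlt A e e'' → ESlt A e'' e' → False

/-- Total maps of event structures. -/
def IsMap (A : ES E) (B : ES F) (f : E → F) : Prop :=
  (∀ x, Config A x → Config B (f '' x)) ∧
  (∀ x, Config A x → ∀ e ∈ x, ∀ e' ∈ x, f e = f e' → e = e')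

def Rigid (A : ES E) (B : ES F) (f : E → F) : Prop :=
  IsMap A B f ∧ ∀ e e', A.le e e' → B.le (f e) (f e')

def OpenMap (A : ES E) (B : ES F) (f : E → F) : Prop :=
  Rigid A B f ∧ ∀ x y, Config A x → Config B y → f '' x ⊆ y →
    ∃ x', Config A x' ∧ x ⊆ x' ∧ f '' x' = y

def ConflictFree (A : ES E) : Prop := ∀ X : Set E, X.Finite → X ∈ A.Con

def IsMinimal (A : ES E) (e : E) : Prop := ∀ e', A.le e' e → e' = e

/-- Event structures with polarities; `true` is Player/positive, `false` is Opponent/negative. -/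
structure ESP (E : Type u) extends ES E where
  pol : E → Bool

def ESP.dual (A : ESP E) : ESP E := { toES := A.toES, pol := fun e => !A.pol e }

def IsESPMap (A : ESP E) (B : ESP F) (f : E → F) : Prop :=
  IsMap A.toES B.toES f ∧ ∀ e, B.pol (f e) = A.pol e

def NegativeESP (A : ESP E) : Prop := ∀ e, IsMinimal A.toES e → A.pol e = false

/-- Single-threaded event structures. -/
def SingleThreaded (A : ES E) : Prop :=
  (∀ e, ∃! m, A.le m e ∧ IsMinimal A m) ∧
  (∀ x e₁ e₂, Cov A x e₁ → Cov A x e₂ → ¬ Config A (insert e₁ (insert e₂ x)) →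
    ∃ m, A.le m e₁ ∧ A.le m e₂)

/- ## Relations as bijections between configurations -/

abbrev Rel2 (E : Type u) := Set (E × E)

def rdom (θ : Rel2 E) : Set E := Prod.fst '' θ
def rran (θ : Rel2 E) : Set E := Prod.snd '' θ
def relBij (θ : Rel2 E) : Prop := ∀ p ∈ θ, ∀ q ∈ θ, (p.1 = q.1 ↔ p.2 = q.2)
def relId (x : Set E) : Rel2 E := (fun e => (e, e)) '' x
def relInv (θ : Rel2 E) : Rel2 E := Prod.swap '' θ
def relComp (θ θ' : Rel2 E) : Rel2 E := {p | ∃ b, (p.1, b) ∈ θ ∧ (b, p.2) ∈ θ'}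
def relRestrict (θ : Rel2 E) (x : Set E) : Rel2 E := {p ∈ θ | p.1 ∈ x}
def relMap (f : E → F) (θ : Rel2 E) : Rel2 F := (Prod.map f f) '' θ

/-- Isomorphism families (without the polarity requirement). -/
def IsIsoFamily (A : ES E) (S : Set (Rel2 E)) : Prop :=
  (∀ θ ∈ S, relBij θ ∧ Config A (rdom θ) ∧ Config A (rran θ)) ∧
  (∀ x, Config A x → relId x ∈ S) ∧
  (∀ θ ∈ S, relInv θ ∈ S) ∧
  (∀ θ ∈ S, ∀ θ' ∈ S, rran θ = rdom θ' → relComp θ θ' ∈ S) ∧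
  (∀ θ ∈ S, ∀ x, Config A x → x ⊆ rdom θ → relRestrict θ x ∈ S) ∧
  (∀ θ ∈ S, ∀ x', Config A x' → rdom θ ⊆ x' → ∃ θ' ∈ S, θ ⊆ θ' ∧ rdom θ' = x')

/-- The members of the family are polarity-preserving. -/
def PolPres (A : ESP E) (S : Set (Rel2 E)) : Prop :=
  ∀ θ ∈ S, ∀ p ∈ θ, A.pol p.1 = A.pol p.2

def FamPres (SA : Set (Rel2 E)) (SB : Set (Rel2 F)) (f : E → F) : Prop :=
  ∀ θ ∈ SA, relMap f θ ∈ SB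

/-- `f ∼ g` : the two maps are symmetric. -/
def SymMaps (A : ES E) (SB : Set (Rel2 F)) (f g : E → F) : Prop :=
  ∀ x, Config A x → {p : F × F | ∃ a ∈ x, p = (f a, g a)} ∈ SB

/-- `θ ⊆⁺ θ'`. -/
def PosRelExt (A : ESP E) (θ θ' : Rel2 E) : Prop :=
  θ ⊆ θ' ∧ ∀ p ∈ θ', p ∉ θ → A.pol p.1 = true ∧ A.pol p.2 = true

/-- `θ ⊆⁻ θ'`. -/
def NegRelExt (A : ESP E) (θ θ' : Rel2 E) : Prop :=
  θ ⊆ θ' ∧ ∀ p ∈ θ', p ∉ θ → A.pol p.1 = false ∧ A.pol p.2 = false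

/-- `x ⊆⁺ x'` for configurations. -/
def PosSetExt (A : ESP E) (x x' : Set E) : Prop :=
  x ⊆ x' ∧ ∀ e ∈ x', e ∉ x → A.pol e = true

def Courteous (S : ESP E) (A : ESP F) (σ : E → F) : Prop :=
  ∀ s₁ s₂, Imm S.toES s₁ s₂ → (S.pol s₁ = true ∨ S.pol s₂ = false) →
    Imm A.toES (σ s₁) (σ s₂)

def Receptive (S : ESP E) (A : ESP F) (σ : E → F) : Prop :=
  ∀ x a, Config S.toES x → Cov A.toES (σ '' x) a → A.pol a = false →
    ∃! s, Cov S.toES x s ∧ σ s = a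

def StrongReceptive (S : ESP E) (SS : Set (Rel2 E)) (A : ESP F) (SA : Set (Rel2 F))
    (σ : E → F) : Prop :=
  ∀ θ ∈ SS, ∀ a₁ a₂ : F, A.pol a₁ = false → A.pol a₂ = false →
    (a₁, a₂) ∉ relMap σ θ → insert (a₁, a₂) (relMap σ θ) ∈ SA →
    ∃! st : E × E, insert st θ ∈ SS ∧ σ st.1 = a₁ ∧ σ st.2 = a₂

/-- Thin: two positive compatible extensions of a member of the family are compatible. -/
def ThinFam (A : ESP E) (S : Set (Rel2 E)) : Prop :=
  ∀ θ ∈ S, ∀ θ₁ ∈ S, ∀ θ₂ ∈ S, PosRelExt A θ θ₁ → PosRelExt A θ θ₂ →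
    Config A.toES (rdom θ₁ ∪ rdom θ₂) → θ₁ ∪ θ₂ ∈ S

/-- Race-preserving essp (family-level). -/
def RacePresFam (A : ESP E) (S : Set (Rel2 E)) : Prop :=
  ∀ θ ∈ S, ∀ θ₁ ∈ S, ∀ θ₂ ∈ S, PosRelExt A θ θ₁ → NegRelExt A θ θ₂ →
    Config A.toES (rdom θ₁ ∪ rdom θ₂) → θ₁ ∪ θ₂ ∈ S

/-- Existence of receptive thin sub-symmetries of `A` and of `A^⊥`. -/
def HasThinReceptiveSubs (A : ESP E) (SA : Set (Rel2 E)) : Prop :=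
  (∃ Sp ⊆ SA, IsIsoFamily A.toES Sp ∧
    (∀ θ ∈ Sp, ∀ θ' ∈ SA, NegRelExt A θ θ' → θ' ∈ Sp) ∧ ThinFam A Sp) ∧
  (∃ Sm ⊆ SA, IsIsoFamily A.toES Sm ∧
    (∀ θ ∈ Sm, ∀ θ' ∈ SA, NegRelExt A.dual θ θ' → θ' ∈ Sm) ∧ ThinFam A.dual Sm)

/-- Thin concurrent games (family-level presentation). -/
def IsTCG (A : ESP E) (SA : Set (Rel2 E)) : Prop :=
  IsIsoFamily A.toES SA ∧ PolPres A SA ∧ RacePresFam A SA ∧ HasThinReceptiveSubs A SA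

/-- ∼-strategies. -/
def IsSimStrategy (S : ESP E) (SS : Set (Rel2 E)) (A : ESP F) (SA : Set (Rel2 F))
    (σ : E → F) : Prop :=
  IsESPMap S A σ ∧ FamPres SS SA σ ∧ IsIsoFamily S.toES SS ∧ PolPres S SS ∧
  Courteous S A σ ∧ StrongReceptive S SS A SA σ ∧ ThinFam S SS

/-- Weak equivalence of ∼-strategies on a common essp. -/
def WeakEquiv {S T GE : Type u} (PS : ESP S) (SS : Set (Rel2 S)) (PT : ESP T)
    (ST : Set (Rel2 T)) (SG : Set (Rel2 GE)) (σ : S → GE) (τ : T → GE) : Prop :=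
  ∃ f : S → T, ∃ g : T → S,
    IsESPMap PS PT f ∧ FamPres SS ST f ∧ IsESPMap PT PS g ∧ FamPres ST SS g ∧
    SymMaps PT.toES ST (f ∘ g) id ∧ SymMaps PS.toES SS (g ∘ f) id ∧
    SymMaps PS.toES SG (τ ∘ f) σ ∧ SymMaps PT.toES SG (σ ∘ g) τ

/- ## Stable families, primes, products, pullbacks -/

def FamLe (Fam : Set (Set E)) (x : Set E) (e e' : E) : Prop :=
  ∀ y ∈ Fam, y ⊆ x → e' ∈ y → e ∈ y

def FamPrime (Fam : Set (Set E)) (x : Set E) (e : E) : Set E :=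
  {e' ∈ x | FamLe Fam x e' e}

def IsPrime (Fam : Set (Set E)) (p : Set E) : Prop :=
  ∃ x ∈ Fam, ∃ e ∈ x, p = FamPrime Fam x e

/-- `e` is the generating (top) event of the prime `p`. -/
def PrRep (Fam : Set (Set E)) (p : Set E) (e : E) : Prop :=
  ∃ x ∈ Fam, e ∈ x ∧ p = FamPrime Fam x e

def PrimeLt (p q : Set E) : Prop := p ⊆ q ∧ p ≠ q

/-- Immediate causality in `Pr(Fam)`. -/
def PrImm (Fam : Set (Set E)) (p q : Set E) : Prop :=
  IsPrime Fam p ∧ IsPrime Fam q ∧ PrimeLt p q ∧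
  ∀ r, IsPrime Fam r → PrimeLt p r → PrimeLt r q → False

/-- Configurations of `Pr(Fam)`. -/
def PrConfig (Fam : Set (Set E)) (z : Set (Set E)) : Prop :=
  z.Finite ∧ (∀ p ∈ z, IsPrime Fam p) ∧
  (∀ p ∈ z, ∀ q, IsPrime Fam q → q ⊆ p → q ∈ z) ∧ ⋃₀ z ∈ Fam

/-- The product stable family `C(A) × C(B)`. -/
def ProdFam (A : ES E) (B : ES F) : Set (Set (E × F)) :=
  {x | x.Finite ∧ Config A (Prod.fst '' x) ∧ Config B (Prod.snd '' x) ∧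
    (∀ p ∈ x, ∀ q ∈ x, p.1 = q.1 → p = q) ∧
    (∀ p ∈ x, ∀ q ∈ x, p.2 = q.2 → p = q) ∧
    (∀ p ∈ x, ∀ q ∈ x, p ≠ q → ∃ y ⊆ x,
      Config A (Prod.fst '' y) ∧ Config B (Prod.snd '' y) ∧ (p ∈ y ↔ q ∉ y))}

/-- The stable family `(C(A) × C(B)) ↾ R` defining the pullback `A ⊛ B` of `f` and `g`. -/
def PbFam (A : ES E) (B : ES F) (f : E → G) (g : F → G) : Set (Set (E × F)) :=
  {x | x ∈ ProdFam A B ∧ ∀ p ∈ x, f p.1 = g p.2}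

/- ## Secured bijections -/

def SecStep (A : ES E) (B : ES F) (θ : Set (E × F)) (p q : E × F) : Prop :=
  p ∈ θ ∧ q ∈ θ ∧ (A.le p.1 q.1 ∨ B.le p.2 q.2)

def SecuredBij (A : ES E) (B : ES F) (f : E → G) (g : F → G) (θ : Set (E × F)) : Prop :=
  Config A (Prod.fst '' θ) ∧ Config B (Prod.snd '' θ) ∧
  (∀ p ∈ θ, ∀ q ∈ θ, (p.1 = q.1 ↔ p.2 = q.2)) ∧
  (∀ p ∈ θ, f p.1 = g p.2) ∧
  (∀ p q, Relation.TransGen (SecStep A B θ) p q → Relation.TransGen (SecStep A B θ) q p → p = q)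

/- ## Parallel composition -/

def IsParES (A : ES E) (B : ES F) (P : ES (E ⊕ F)) : Prop :=
  (∀ e e', P.le e e' ↔ Sum.LiftRel A.le B.le e e') ∧
  (∀ X, X ∈ P.Con ↔ X.Finite ∧ (Sum.inl ⁻¹' X) ∈ A.Con ∧ (Sum.inr ⁻¹' X) ∈ B.Con)

def IsParESP (A : ESP E) (B : ESP F) (P : ESP (E ⊕ F)) : Prop :=
  IsParES A.toES B.toES P.toES ∧
  (∀ a, P.pol (Sum.inl a) = A.pol a) ∧ (∀ b, P.pol (Sum.inr b) = B.pol b)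

def parFam (SA : Set (Rel2 E)) (SB : Set (Rel2 F)) : Set (Rel2 (E ⊕ F)) :=
  {θ | ∃ θA ∈ SA, ∃ θB ∈ SB, θ = relMap Sum.inl θA ∪ relMap Sum.inr θB}

/- ## Copycat -/

def ccPol (A : ESP E) (p : Bool × E) : Bool := cond p.1 (A.pol p.2) (!A.pol p.2)

def ccBase (A : ESP E) (p q : Bool × E) : Prop :=
  (p.1 = q.1 ∧ A.le p.2 q.2) ∨ (p.2 = q.2 ∧ p.1 ≠ q.1 ∧ ccPol A q = true)

def ccLe (A : ESP E) : Bool × E → Bool × E → Prop := Relation.ReflTransGen (ccBase A)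

def ccDcl (A : ESP E) (X : Set (Bool × E)) : Set (Bool × E) := {p | ∃ q ∈ X, ccLe A p q}

def IsCopycatOf (A : ESP E) (CA : ESP (Bool × E)) : Prop :=
  (∀ p q, CA.le p q ↔ ccLe A p q) ∧
  (∀ X, X ∈ CA.Con ↔ X.Finite ∧
    {a | (false, a) ∈ ccDcl A X} ∈ A.Con ∧ {a | (true, a) ∈ ccDcl A X} ∈ A.Con) ∧
  (∀ p, CA.pol p = ccPol A p)

def ccMap (f : E → F) : Bool × E → Bool × F := Prod.map id f

def ccToGame : Bool × E → E ⊕ E := fun p => cond p.1 (Sum.inr p.2) (Sum.inl p.2)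

/- ## Symmetry presented as spans -/

def famOf (Et : ES F) (l r : F → E) : Set (Rel2 E) :=
  {θ | ∃ x, Config Et x ∧ θ = {p | ∃ aa ∈ x, p = (l aa, r aa)}}

def IsSymSpanES (A : ES E) (Et : ES F) (l r : F → E) : Prop :=
  OpenMap Et A l ∧ OpenMap Et A r ∧
  (∀ aa aa', l aa = l aa' → r aa = r aa' → aa = aa') ∧
  (∀ x, Config A x → relId x ∈ famOf Et l r) ∧
  (∀ θ ∈ famOf Et l r, relInv θ ∈ famOf Et l r) ∧
  (∀ θ ∈ famOf Et l r, ∀ θ' ∈ famOf Et l r, rran θ = rdom θ' → relComp θ θ' ∈ famOf Et l r)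

def IsSymSpanESP (A : ESP E) (Et : ESP F) (l r : F → E) : Prop :=
  IsSymSpanES A.toES Et.toES l r ∧ IsESPMap Et A l ∧ IsESPMap Et A r

def MapPresRaces (S : ESP E) (A : ESP F) (f : E → F) : Prop :=
  ∀ x e₁ e₂, Cov S.toES x e₁ → Cov S.toES x e₂ →
    S.pol e₁ = false → S.pol e₂ = true →
    ¬ Config S.toES (insert e₁ (insert e₂ x)) →
    ¬ Config A.toES (insert (f e₁) (insert (f e₂) (f '' x)))

def ReflPosCompat (St : ESP F) (S : ES E) (l : F → E) : Prop :=
  ∀ x x₁ x₂, Config St.toES x → Config St.toES x₁ → Config St.toES x₂ →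
    x ⊆ x₁ → x ⊆ x₂ →
    (∀ e ∈ x₁, e ∉ x → St.pol e = true) → (∀ e ∈ x₂, e ∉ x → St.pol e = true) →
    Config S (l '' x₁ ∪ l '' x₂) → Config St.toES (x₁ ∪ x₂)

/- ## Higher symmetry -/

/-- The higher isomorphism family of an essp given by its family `SA`, at the level of
pairs of events: members correspond to commuting squares `φ' ∘ θ = θ' ∘ φ`. -/
def HigherFam (SA : Set (Rel2 E)) : Set (Rel2 (E × E)) :=
  {Φ | ∃ θ ∈ SA, ∃ θ' ∈ SA, ∃ φ ∈ SA, ∃ φ' ∈ SA,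
    rdom φ = rdom θ ∧ rdom φ' = rran θ ∧ rran φ = rdom θ' ∧ rran φ' = rran θ' ∧
    (∀ a b c d, (a, b) ∈ θ → (a, c) ∈ φ → (b, d) ∈ φ' → (c, d) ∈ θ') ∧
    Φ = {P | ∃ a b c d, (a, b) ∈ θ ∧ (a, c) ∈ φ ∧ (b, d) ∈ φ' ∧ P = ((a, b), (c, d))}}

/-- The higher isomorphism family, transported to the events of `Ã = Pr(SA)`,
i.e. primes of the stable family `SA`. -/
def LiftFam (SA : Set (Rel2 E)) : Set (Rel2 {p : Rel2 E // IsPrime SA p}) :=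
  {Θ | ∃ θ ∈ SA, ∃ θ' ∈ SA, ∃ φ ∈ SA, ∃ φ' ∈ SA,
    rdom φ = rdom θ ∧ rdom φ' = rran θ ∧ rran φ = rdom θ' ∧ rran φ' = rran θ' ∧
    (∀ a b c d, (a, b) ∈ θ → (a, c) ∈ φ → (b, d) ∈ φ' → (c, d) ∈ θ') ∧
    Θ = {P | ∃ a b c d, (a, b) ∈ θ ∧ (a, c) ∈ φ ∧ (b, d) ∈ φ' ∧
          P.1.1 = FamPrime SA θ (a, b) ∧ P.2.1 = FamPrime SA θ' (c, d)}}

/- ## Pullbacks as universal properties -/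

def IsPullbackES {A B C P : Type u} (EP : ES P) (EA : ES A) (EB : ES B) (EC : ES C)
    (Pi1 : P → A) (Pi2 : P → B) (f : A → C) (g : B → C) : Prop :=
  IsMap EP EA Pi1 ∧ IsMap EP EB Pi2 ∧ f ∘ Pi1 = g ∘ Pi2 ∧
  ∀ {X : Type u} (EX : ES X) (h₁ : X → A) (h₂ : X → B),
    IsMap EX EA h₁ → IsMap EX EB h₂ → f ∘ h₁ = g ∘ h₂ →
    ∃! h : X → P, IsMap EX EP h ∧ Pi1 ∘ h = h₁ ∧ Pi2 ∘ h = h₂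

def IsPullbackESP {A B C P : Type u} (EP : ESP P) (EA : ESP A) (EB : ESP B) (EC : ESP C)
    (Pi1 : P → A) (Pi2 : P → B) (f : A → C) (g : B → C) : Prop :=
  IsESPMap EP EA Pi1 ∧ IsESPMap EP EB Pi2 ∧ f ∘ Pi1 = g ∘ Pi2 ∧
  ∀ {X : Type u} (EX : ESP X) (h₁ : X → A) (h₂ : X → B),
    IsESPMap EX EA h₁ → IsESPMap EX EB h₂ → f ∘ h₁ = g ∘ h₂ →
    ∃! h : X → P, IsESPMap EX EP h ∧ Pi1 ∘ h = h₁ ∧ Pi2 ∘ h = h₂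

/- ## Composition of strategies -/

def compLeft {S GA GB GC : Type u} (σ : S → GA ⊕ GB) : S ⊕ GC → (GA ⊕ GB) ⊕ GC :=
  Sum.map σ id

def compRight {T GA GB GC : Type u} (τ : T → GB ⊕ GC) : GA ⊕ T → (GA ⊕ GB) ⊕ GC :=
  Sum.elim (fun a => Sum.inl (Sum.inl a))
    (fun t => Sum.elim (fun b => Sum.inl (Sum.inr b)) (fun c => Sum.inr c) (τ t))

def outAC {A B C : Type u} : (A ⊕ B) ⊕ C → Option (A ⊕ C) :=
  Sum.elim (Sum.elim (fun a => some (Sum.inl a)) (fun _ => none)) (fun c => some (Sum.inr c))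

/-- Visible events of the interaction. -/
def VisE {S T GA GB GC : Type u} (σ : S → GA ⊕ GB) (e : (S ⊕ GC) × (GA ⊕ T)) : Prop :=
  (outAC (compLeft σ e.1)).isSome = true

/-- Visible primes of the interaction. -/
def VisP {S T GA GB GC : Type u} (Fam : Set (Set ((S ⊕ GC) × (GA ⊕ T))))
    (σ : S → GA ⊕ GB) (p : Set ((S ⊕ GC) × (GA ⊕ T))) : Prop :=
  ∃ e, PrRep Fam p e ∧ VisE σ e

/-- The underlying relation of a bijection between configurations of `Pr(Fam)`. -/
def relUnder {P : Type u} (Fam : Set (Set P)) (Θ : Rel2 (Set P)) :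
    Rel2 P :=
  {ee | ∃ pq ∈ Θ, PrRep Fam pq.1 ee.1 ∧ PrRep Fam pq.2 ee.2}

/-- The isomorphism family of the pullback `Pr(Fam)` of two ∼-strategies,
characterised via the projections. -/
def PbSymFam {A B : Type u} (Fam : Set (Set (A × B))) (S1 : Set (Rel2 A))
    (S2 : Set (Rel2 B)) : Set (Rel2 (Set (A × B))) :=
  {Θ | relBij Θ ∧ PrConfig Fam (rdom Θ) ∧ PrConfig Fam (rran Θ) ∧
    relMap Prod.fst (relUnder Fam Θ) ∈ S1 ∧ relMap Prod.snd (relUnder Fam Θ) ∈ S2}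

/-- A witness for the concrete composition `τ ⊙ σ` of strategies. -/
structure CompWitness {S T GA GB GC : Type u} (PS : ESP S) (PT : ESP T)
    (PA : ESP GA) (PC : ESP GC) (σ : S → GA ⊕ GB) (τ : T → GB ⊕ GC) where
  L : ES (S ⊕ GC)
  R : ES (GA ⊕ T)
  hL : IsParES PS.toES PC.toES L
  hR : IsParES PA.toES PT.toES R
  Comp : ESP {p : Set ((S ⊕ GC) × (GA ⊕ T)) //
    VisP (PbFam L R (compLeft σ) (compRight τ)) σ p}
  hle : ∀ p q, Comp.le p q ↔ p.1 ⊆ q.1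
  hcon : ∀ X, X ∈ Comp.Con ↔
    X.Finite ∧ ⋃₀ (Subtype.val '' X) ∈ PbFam L R (compLeft σ) (compRight τ)
  co : {p : Set ((S ⊕ GC) × (GA ⊕ T)) //
    VisP (PbFam L R (compLeft σ) (compRight τ)) σ p} → GA ⊕ GC
  hco : ∀ p e, PrRep (PbFam L R (compLeft σ) (compRight τ)) p.1 e →
    outAC (compLeft σ e.1) = some (co p)
  hpol : ∀ p, Comp.pol p = Sum.elim (fun a => !PA.pol a) (fun c => PC.pol c) (co p)

/-- The isomorphism family of the composition: restriction to visible primes of the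
family of the interaction. -/
def cfam {S T GA GB GC : Type u} {PS : ESP S} {PT : ESP T} {PA : ESP GA} {PC : ESP GC}
    {σ : S → GA ⊕ GB} {τ : T → GB ⊕ GC}
    (SS : Set (Rel2 S)) (ST : Set (Rel2 T)) (SA : Set (Rel2 GA)) (SC : Set (Rel2 GC))
    (w : CompWitness PS PT PA PC σ τ) :
    Set (Rel2 {p : Set ((S ⊕ GC) × (GA ⊕ T)) //
      VisP (PbFam w.L w.R (compLeft σ) (compRight τ)) σ p}) :=
  {Θ | ∃ Φ ∈ PbSymFam (PbFam w.L w.R (compLeft σ) (compRight τ))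
      (parFam SS SC) (parFam SA ST),
    relMap Subtype.val Θ =
      {pq ∈ Φ | VisP (PbFam w.L w.R (compLeft σ) (compRight τ)) σ pq.1 ∧
                VisP (PbFam w.L w.R (compLeft σ) (compRight τ)) σ pq.2}}
/-! ### Auxiliary development for statement 6 -/

section AuxRel

variable {E' F' : Type u}

lemma mem_rdom' {θ : Rel2 E'} {e : E' × E'} (he : e ∈ θ) : e.1 ∈ rdom θ := ⟨e, he, rfl⟩

lemma mem_rran' {θ : Rel2 E'} {e : E' × E'} (he : e ∈ θ) : e.2 ∈ rran θ := ⟨e, he, rfl⟩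

lemma rdom_mono {θ θ' : Rel2 E'} (h : θ ⊆ θ') : rdom θ ⊆ rdom θ' := Set.image_mono h

lemma rran_mono {θ θ' : Rel2 E'} (h : θ ⊆ θ') : rran θ ⊆ rran θ' := Set.image_mono h

lemma rdom_union (θ θ' : Rel2 E') : rdom (θ ∪ θ') = rdom θ ∪ rdom θ' := Set.image_union _ _ _

lemma rran_union (θ θ' : Rel2 E') : rran (θ ∪ θ') = rran θ ∪ rran θ' := Set.image_union _ _ _

lemma rdom_insert (e : E' × E') (θ : Rel2 E') : rdom (insert e θ) = insert e.1 (rdom θ) :=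
  Set.image_insert_eq

lemma rran_insert (e : E' × E') (θ : Rel2 E') : rran (insert e θ) = insert e.2 (rran θ) :=
  Set.image_insert_eq

lemma rdom_relId (x : Set E') : rdom (relId x) = x := by
  simp [rdom, relId, Set.image_image]

lemma rran_relId (x : Set E') : rran (relId x) = x := by
  simp [rran, relId, Set.image_image]

lemma mem_relId {x : Set E'} {p : E' × E'} : p ∈ relId x ↔ p.1 ∈ x ∧ p.2 = p.1 := by
  constructor
  · rintro ⟨a, ha, rfl⟩; exact ⟨ha, rfl⟩
  · rintro ⟨h1, h2⟩
    refine ⟨p.1, h1, Prod.ext rfl h2.symm⟩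

lemma relId_insert (a : E') (x : Set E') : relId (insert a x) = insert (a, a) (relId x) :=
  Set.image_insert_eq

lemma mem_relInv {θ : Rel2 E'} {p : E' × E'} : p ∈ relInv θ ↔ (p.2, p.1) ∈ θ := by
  constructor
  · rintro ⟨q, hq, rfl⟩; simpa using hq
  · intro h; exact ⟨(p.2, p.1), h, rfl⟩

lemma rdom_relInv (θ : Rel2 E') : rdom (relInv θ) = rran θ := by
  simp [rdom, rran, relInv, Set.image_image]

lemma rran_relInv (θ : Rel2 E') : rran (relInv θ) = rdom θ := by
  simp [rdom, rran, relInv, Set.image_image]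

lemma mem_relComp {α β : Rel2 E'} {p : E' × E'} :
    p ∈ relComp α β ↔ ∃ b, (p.1, b) ∈ α ∧ (b, p.2) ∈ β := Iff.rfl

lemma rdom_relComp {α β : Rel2 E'} (h : rran α = rdom β) : rdom (relComp α β) = rdom α := by
  ext a
  constructor
  · rintro ⟨p, ⟨b, h1, h2⟩, rfl⟩; exact ⟨(p.1, b), h1, rfl⟩
  · rintro ⟨p, hp, rfl⟩
    have hb : p.2 ∈ rdom β := h ▸ mem_rran' hp
    obtain ⟨q, hq, hq1⟩ := hb
    refine ⟨(p.1, q.2), ⟨p.2, ?_, ?_⟩, rfl⟩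
    · simpa using hp
    · have : (q.1, q.2) ∈ β := by simpa using hq
      rwa [hq1] at this
  
lemma rran_relComp {α β : Rel2 E'} (h : rran α = rdom β) : rran (relComp α β) = rran β := by
  ext d
  constructor
  · rintro ⟨p, ⟨b, h1, h2⟩, rfl⟩; exact ⟨(b, p.2), h2, rfl⟩
  · rintro ⟨q, hq, rfl⟩
    have hb : q.1 ∈ rran α := by rw [h]; exact mem_rdom' hq
    obtain ⟨r, hr, hr2⟩ := hb
    refine ⟨(r.1, q.2), ⟨q.1, ?_, ?_⟩, rfl⟩
    · rw [← hr2]; simpa using hr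
    · simpa using hq

lemma mem_relMap {f : E' → F'} {θ : Rel2 E'} {p : F' × F'} :
    p ∈ relMap f θ ↔ ∃ e ∈ θ, p = (f e.1, f e.2) := by
  constructor
  · rintro ⟨e, he, rfl⟩; exact ⟨e, he, rfl⟩
  · rintro ⟨e, he, rfl⟩; exact ⟨e, he, rfl⟩

lemma mem_relMap' {f : E' → F'} {θ : Rel2 E'} {e : E' × E'} (he : e ∈ θ) :
    (f e.1, f e.2) ∈ relMap f θ := ⟨e, he, rfl⟩

lemma rdom_relMap (f : E' → F') (θ : Rel2 E') : rdom (relMap f θ) = f '' rdom θ := by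
  simp [rdom, relMap, Set.image_image]

lemma rran_relMap (f : E' → F') (θ : Rel2 E') : rran (relMap f θ) = f '' rran θ := by
  simp [rran, relMap, Set.image_image]

lemma relMap_insert (f : E' → F') (e : E' × E') (θ : Rel2 E') :
    relMap f (insert e θ) = insert (f e.1, f e.2) (relMap f θ) := Set.image_insert_eq

lemma relMap_relId (f : E' → F') (x : Set E') : relMap f (relId x) = relId (f '' x) := by
  simp [relMap, relId, Set.image_image]

lemma bij_eq_of_fst {θ : Rel2 E'} (hb : relBij θ) {p q : E' × E'} (hp : p ∈ θ) (hq : q ∈ θ)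
    (h : p.1 = q.1) : p = q := Prod.ext h ((hb p hp q hq).1 h)

lemma bij_eq_of_snd {θ : Rel2 E'} (hb : relBij θ) {p q : E' × E'} (hp : p ∈ θ) (hq : q ∈ θ)
    (h : p.2 = q.2) : p = q := Prod.ext ((hb p hp q hq).2 h) h

lemma mem_relRestrict {θ : Rel2 E'} {x : Set E'} {p : E' × E'} :
    p ∈ relRestrict θ x ↔ p ∈ θ ∧ p.1 ∈ x := Iff.rfl

lemma relRestrict_subset (θ : Rel2 E') (x : Set E') : relRestrict θ x ⊆ θ := fun _ h => h.1

lemma rdom_relRestrict {θ : Rel2 E'} {x : Set E'} (h : x ⊆ rdom θ) :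
    rdom (relRestrict θ x) = x := by
  ext a
  constructor
  · rintro ⟨p, hp, rfl⟩; exact hp.2
  · intro ha
    obtain ⟨p, hp, rfl⟩ := h ha
    exact ⟨p, ⟨hp, ha⟩, rfl⟩

/-- down-set of an element of a configuration is a configuration -/
lemma config_downset (A : ES E') {x : Set E'} {a : E'} (hx : Config A x) (ha : a ∈ x) :
    Config A {a' | A.le a' a} := by
  constructor
  · exact A.con_mono (fun a' h => hx.2 ha h) hx.1
  · intro e he e' h; exact A.le_trans h he

lemma downset_subset (A : ES E') {x : Set E'} {a : E'} (hx : Config A x) (ha : a ∈ x) :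
    {a' | A.le a' a} ⊆ x := fun _ h => hx.2 ha h

lemma config_union (A : ES E') {x y z : Set E'} (hx : Config A x) (hy : Config A y)
    (hz : Config A z) (h1 : x ⊆ z) (h2 : y ⊆ z) : Config A (x ∪ y) := by
  refine ⟨A.con_mono (Set.union_subset h1 h2) hz.1, ?_⟩
  rintro e (he | he) e' h
  · exact Or.inl (hx.2 he h)
  · exact Or.inr (hy.2 he h)

lemma config_finite (A : ES E') {x : Set E'} (hx : Config A x) : x.Finite :=
  A.con_finite _ hx.1

end AuxRel

section AuxFam

variable {E' : Type u} {A : ES E'} {SB : Set (Rel2 E')}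

/-- `{e' ∈ θ | e'.1 ≤ e.1}` : the prime of `θ` generated by `e`. -/
def dpr (A : ES E') (θ : Rel2 E') (e : E' × E') : Rel2 E' :=
  {e' ∈ θ | A.le e'.1 e.1}

lemma dpr_subset (θ : Rel2 E') (e : E' × E') : dpr A θ e ⊆ θ := fun _ h => h.1

lemma mem_dpr_self {θ : Rel2 E'} {e : E' × E'} (he : e ∈ θ) : e ∈ dpr A θ e :=
  ⟨he, A.le_refl _⟩

lemma fam_bij (hf : IsIsoFamily A SB) {θ : Rel2 E'} (hθ : θ ∈ SB) : relBij θ :=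
  (hf.1 _ hθ).1

lemma fam_cdom (hf : IsIsoFamily A SB) {θ : Rel2 E'} (hθ : θ ∈ SB) : Config A (rdom θ) :=
  (hf.1 _ hθ).2.1

lemma fam_cran (hf : IsIsoFamily A SB) {θ : Rel2 E'} (hθ : θ ∈ SB) : Config A (rran θ) :=
  (hf.1 _ hθ).2.2

lemma fam_finite (hf : IsIsoFamily A SB) {θ : Rel2 E'} (hθ : θ ∈ SB) : θ.Finite := by
  refine Set.Finite.of_finite_image (f := Prod.fst) ?_ ?_
  · exact config_finite A (fam_cdom hf hθ)
  · intro p hp q hq h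
    exact bij_eq_of_fst (fam_bij hf hθ) hp hq h

lemma fam_restrict (hf : IsIsoFamily A SB) {θ : Rel2 E'} {x : Set E'} (hθ : θ ∈ SB)
    (hx : Config A x) (hsub : x ⊆ rdom θ) : relRestrict θ x ∈ SB :=
  hf.2.2.2.2.1 _ hθ _ hx hsub

lemma fam_dpr (hf : IsIsoFamily A SB) {θ : Rel2 E'} {e : E' × E'} (hθ : θ ∈ SB)
    (he : e ∈ θ) : dpr A θ e ∈ SB := by
  have h1 : Config A {a | A.le a e.1} := config_downset A (fam_cdom hf hθ) (mem_rdom' he)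
  have h2 : {a | A.le a e.1} ⊆ rdom θ := downset_subset A (fam_cdom hf hθ) (mem_rdom' he)
  exact fam_restrict hf hθ h1 h2

lemma rdom_dpr (hf : IsIsoFamily A SB) {θ : Rel2 E'} {e : E' × E'} (hθ : θ ∈ SB)
    (he : e ∈ θ) : rdom (dpr A θ e) = {a | A.le a e.1} :=
  rdom_relRestrict (downset_subset A (fam_cdom hf hθ) (mem_rdom' he))

/-- primes do not depend on the ambient member. -/
lemma dpr_ambient (hf : IsIsoFamily A SB) {μ θ : Rel2 E'} {e : E' × E'} (hμ : μ ∈ SB)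
    (hθ : θ ∈ SB) (hsub : μ ⊆ θ) (he : e ∈ μ) : dpr A θ e = dpr A μ e := by
  ext e'
  constructor
  · rintro ⟨h1, h2⟩
    have hd : e'.1 ∈ rdom μ := (fam_cdom hf hμ).2 (mem_rdom' he) h2
    obtain ⟨f, hfμ, hf1⟩ := hd
    have : f = e' := bij_eq_of_fst (fam_bij hf hθ) (hsub hfμ) h1 hf1
    exact ⟨this ▸ hfμ, h2⟩
  · rintro ⟨h1, h2⟩; exact ⟨hsub h1, h2⟩

def IsTopOf (A : ES E') (p : Rel2 E') (e : E' × E') : Prop :=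
  e ∈ p ∧ ∀ e' ∈ p, A.le e'.1 e.1

lemma top_dpr {θ : Rel2 E'} {e : E' × E'} (he : e ∈ θ) : IsTopOf A (dpr A θ e) e :=
  ⟨mem_dpr_self he, fun _ h => h.2⟩

lemma topUnique (hf : IsIsoFamily A SB) {p : Rel2 E'} {e f : E' × E'} (hp : p ∈ SB)
    (h1 : IsTopOf A p e) (h2 : IsTopOf A p f) : e = f :=
  bij_eq_of_fst (fam_bij hf hp) h1.1 h2.1
    (A.le_antisymm (h2.2 _ h1.1) (h1.2 _ h2.1))

lemma famPrime_eq_dpr (hf : IsIsoFamily A SB) {θ : Rel2 E'} {e : E' × E'} (hθ : θ ∈ SB)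
    (he : e ∈ θ) : FamPrime SB θ e = dpr A θ e := by
  ext e'
  constructor
  · rintro ⟨h1, h2⟩
    have := h2 (dpr A θ e) (fam_dpr hf hθ he) (dpr_subset θ e) (mem_dpr_self he)
    exact this
  · rintro ⟨h1, h2⟩
    refine ⟨h1, ?_⟩
    intro y hy hsub hey
    have hd : e'.1 ∈ rdom y := (fam_cdom hf hy).2 (mem_rdom' hey) h2
    obtain ⟨f, hfy, hf1⟩ := hd
    have : f = e' := bij_eq_of_fst (fam_bij hf hθ) (hsub hfy) h1 hf1
    exact this ▸ hfy

lemma isPrime_dpr (hf : IsIsoFamily A SB) {θ : Rel2 E'} {e : E' × E'} (hθ : θ ∈ SB)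
    (he : e ∈ θ) : IsPrime SB (dpr A θ e) :=
  ⟨θ, hθ, e, he, (famPrime_eq_dpr hf hθ he).symm⟩

lemma prime_structure (hf : IsIsoFamily A SB) {p : Rel2 E'} (hp : IsPrime SB p) :
    p ∈ SB ∧ ∃ e, IsTopOf A p e ∧ p = dpr A p e := by
  obtain ⟨θ, hθ, e, he, hpe⟩ := hp
  rw [famPrime_eq_dpr hf hθ he] at hpe
  have hpB : p ∈ SB := hpe ▸ fam_dpr hf hθ he
  have hep : e ∈ p := hpe ▸ mem_dpr_self he
  have hamb : dpr A θ e = dpr A p e := dpr_ambient hf hpB hθ (hpe ▸ dpr_subset θ e) hep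
  refine ⟨hpB, e, ?_, hpe.trans hamb⟩
  rw [hpe, hamb]
  exact top_dpr hep

lemma prime_mem_fam (hf : IsIsoFamily A SB) {p : Rel2 E'} (hp : IsPrime SB p) : p ∈ SB :=
  (prime_structure hf hp).1

lemma prime_eq_dpr_of_subset (hf : IsIsoFamily A SB) {p θ : Rel2 E'} (hp : IsPrime SB p)
    (hθ : θ ∈ SB) (hsub : p ⊆ θ) : ∃ e ∈ θ, p = dpr A θ e ∧ IsTopOf A p e := by
  obtain ⟨hpB, e, htop, hpe⟩ := prime_structure hf hp
  have : dpr A θ e = dpr A p e := dpr_ambient hf hpB hθ hsub htop.1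
  exact ⟨e, hsub htop.1, hpe.trans this.symm, htop⟩

lemma dpr_subset_iff (hf : IsIsoFamily A SB) {θ : Rel2 E'} {e f : E' × E'} (hθ : θ ∈ SB)
    (he : e ∈ θ) (hff : f ∈ θ) : dpr A θ e ⊆ dpr A θ f ↔ A.le e.1 f.1 := by
  constructor
  · intro h; exact (h (mem_dpr_self he)).2
  · intro h e' he'
    exact ⟨he'.1, A.le_trans he'.2 h⟩

lemma dpr_eq_iff (hf : IsIsoFamily A SB) {θ : Rel2 E'} {e f : E' × E'} (hθ : θ ∈ SB)
    (he : e ∈ θ) (hff : f ∈ θ) : dpr A θ e = dpr A θ f ↔ e = f := by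
  constructor
  · intro h
    exact topUnique hf (fam_dpr hf hθ he) (top_dpr he) (h ▸ top_dpr hff)
  · rintro rfl; rfl

/-- the set of primes of a member. -/
def prS (A : ES E') (θ : Rel2 E') : Set (Rel2 E') := {p | ∃ e ∈ θ, p = dpr A θ e}

lemma dpr_mem_prS {θ : Rel2 E'} {e : E' × E'} (he : e ∈ θ) : dpr A θ e ∈ prS A θ :=
  ⟨e, he, rfl⟩

lemma sUnion_prS {θ : Rel2 E'} : ⋃₀ prS A θ = θ := by
  apply Set.Subset.antisymm
  · rintro e ⟨p, ⟨f, hff, rfl⟩, hep⟩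
    exact hep.1
  · intro e he
    exact ⟨dpr A θ e, dpr_mem_prS he, mem_dpr_self he⟩

lemma prS_finite (hf : IsIsoFamily A SB) {θ : Rel2 E'} (hθ : θ ∈ SB) : (prS A θ).Finite := by
  have : prS A θ = (fun e => dpr A θ e) '' θ := by
    ext p
    constructor
    · rintro ⟨e, he, rfl⟩; exact ⟨e, he, rfl⟩
    · rintro ⟨e, he, rfl⟩; exact ⟨e, he, rfl⟩
  rw [this]
  exact (fam_finite hf hθ).image _

lemma prS_prime (hf : IsIsoFamily A SB) {θ p : Rel2 E'} (hθ : θ ∈ SB) (hp : p ∈ prS A θ) :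
    IsPrime SB p := by
  obtain ⟨e, he, rfl⟩ := hp
  exact isPrime_dpr hf hθ he

lemma prime_mem_prS (hf : IsIsoFamily A SB) {p θ : Rel2 E'} (hp : IsPrime SB p) (hθ : θ ∈ SB)
    (hsub : p ⊆ θ) : p ∈ prS A θ := by
  obtain ⟨e, he, hpe, _⟩ := prime_eq_dpr_of_subset hf hp hθ hsub
  exact ⟨e, he, hpe⟩

lemma prS_mono (hf : IsIsoFamily A SB) {μ θ : Rel2 E'} (hμ : μ ∈ SB) (hθ : θ ∈ SB)
    (hsub : μ ⊆ θ) : prS A μ ⊆ prS A θ := by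
  rintro p ⟨e, he, rfl⟩
  refine ⟨e, hsub he, ?_⟩
  rw [dpr_ambient hf hμ hθ hsub he]

lemma prS_subset_imp {μ θ : Rel2 E'} (h : prS A μ ⊆ prS A θ) : μ ⊆ θ := by
  have := Set.sUnion_subset_sUnion h
  rwa [sUnion_prS, sUnion_prS] at this

end AuxFam

section AuxSq

variable {E' : Type u}

/-- the fourth side of a commuting square determined by the other three. -/
def psi (θ φ φ' : Rel2 E') : Rel2 E' := relComp (relComp (relInv φ) θ) φ'

/-- triples giving rise to members of the higher isomorphism family. -/
structure GoodT (SB : Set (Rel2 E')) (θ φ φ' : Rel2 E') : Prop where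
  hθ : θ ∈ SB
  hφ : φ ∈ SB
  hφ' : φ' ∈ SB
  dφ : rdom φ = rdom θ
  dφ' : rdom φ' = rran θ

variable {A : ES E'} {SB : Set (Rel2 E')}

lemma mem_psi {θ φ φ' : Rel2 E'} {p : E' × E'} :
    p ∈ psi θ φ φ' ↔ ∃ a b, (a, p.1) ∈ φ ∧ (a, b) ∈ θ ∧ (b, p.2) ∈ φ' := by
  constructor
  · rintro ⟨b, ⟨a, h1, h2⟩, h3⟩
    exact ⟨a, b, mem_relInv.1 h1, h2, h3⟩
  · rintro ⟨a, b, h1, h2, h3⟩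
    exact ⟨b, ⟨a, mem_relInv.2 h1, h2⟩, h3⟩

lemma psi_comm {θ φ φ' : Rel2 E'} {a b c d : E'} (h1 : (a, b) ∈ θ) (h2 : (a, c) ∈ φ)
    (h3 : (b, d) ∈ φ') : (c, d) ∈ psi θ φ φ' := mem_psi.2 ⟨a, b, h2, h1, h3⟩

lemma psi_mono {θ φ φ' κ χ χ' : Rel2 E'} (h1 : θ ⊆ κ) (h2 : φ ⊆ χ) (h3 : φ' ⊆ χ') :
    psi θ φ φ' ⊆ psi κ χ χ' := by
  intro p hp
  obtain ⟨a, b, g1, g2, g3⟩ := mem_psi.1 hp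
  exact mem_psi.2 ⟨a, b, h2 g1, h1 g2, h3 g3⟩

lemma rdom_psi {θ φ φ' : Rel2 E'} (hg : GoodT SB θ φ φ') : rdom (psi θ φ φ') = rran φ := by
  have h1 : rran (relInv φ) = rdom θ := by rw [rran_relInv, hg.dφ]
  have h2 : rran (relComp (relInv φ) θ) = rran θ := rran_relComp h1
  rw [psi, rdom_relComp (by rw [h2, hg.dφ']), rdom_relComp h1, rdom_relInv]

lemma rran_psi {θ φ φ' : Rel2 E'} (hg : GoodT SB θ φ φ') : rran (psi θ φ φ') = rran φ' := by
  have h1 : rran (relInv φ) = rdom θ := by rw [rran_relInv, hg.dφ]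
  have h2 : rran (relComp (relInv φ) θ) = rran θ := rran_relComp h1
  rw [psi, rran_relComp (by rw [h2, hg.dφ'])]

lemma psi_mem (hf : IsIsoFamily A SB) {θ φ φ' : Rel2 E'} (hg : GoodT SB θ φ φ') :
    psi θ φ φ' ∈ SB := by
  have hinv : relInv φ ∈ SB := hf.2.2.1 _ hg.hφ
  have h1 : rran (relInv φ) = rdom θ := by rw [rran_relInv, hg.dφ]
  have c1 : relComp (relInv φ) θ ∈ SB := hf.2.2.2.1 _ hinv _ hg.hθ h1
  have h2 : rran (relComp (relInv φ) θ) = rran θ := rran_relComp h1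
  exact hf.2.2.2.1 _ c1 _ hg.hφ' (by rw [h2, hg.dφ'])

lemma good_total {θ φ φ' : Rel2 E'} (hg : GoodT SB θ φ φ') {a b : E'} (h : (a, b) ∈ θ) :
    ∃ c d, (a, c) ∈ φ ∧ (b, d) ∈ φ' := by
  have ha : a ∈ rdom φ := hg.dφ ▸ mem_rdom' h
  have hb : b ∈ rdom φ' := hg.dφ' ▸ mem_rran' h
  obtain ⟨p, hp, hp1⟩ := ha
  obtain ⟨q, hq, hq1⟩ := hb
  refine ⟨p.2, q.2, ?_, ?_⟩
  · rw [← hp1]; simpa using hp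
  · rw [← hq1]; simpa using hq

lemma psi_back1 (hf : IsIsoFamily A SB) {θ φ φ' : Rel2 E'} (hg : GoodT SB θ φ φ')
    {a b c d : E'} (h1 : (a, b) ∈ θ) (h2 : (a, c) ∈ φ) (h3 : (c, d) ∈ psi θ φ φ') :
    (b, d) ∈ φ' := by
  obtain ⟨a₀, b₀, g1, g2, g3⟩ := mem_psi.1 h3
  have ha : (a₀, c) = (a, c) := bij_eq_of_snd (fam_bij hf hg.hφ) g1 h2 rfl
  have hb : (a, b₀) = (a, b) := by
    refine bij_eq_of_fst (fam_bij hf hg.hθ) ?_ h1 rfl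
    rw [show a = a₀ from congrArg Prod.fst ha.symm]; exact g2
  have : b₀ = b := congrArg Prod.snd hb
  rwa [this] at g3

lemma psi_back2 (hf : IsIsoFamily A SB) {θ φ φ' : Rel2 E'} (hg : GoodT SB θ φ φ')
    {a b c d : E'} (h2 : (a, c) ∈ φ) (h3 : (b, d) ∈ φ') (h4 : (c, d) ∈ psi θ φ φ') :
    (a, b) ∈ θ := by
  obtain ⟨a₀, b₀, g1, g2, g3⟩ := mem_psi.1 h4
  have ha : a₀ = a := congrArg Prod.fst (bij_eq_of_snd (fam_bij hf hg.hφ) g1 h2 rfl)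
  rw [ha] at g2
  have hb : b₀ = b := congrArg Prod.fst (bij_eq_of_snd (fam_bij hf hg.hφ') g3 h3 rfl)
  rwa [hb] at g2

lemma psi_unique (hf : IsIsoFamily A SB) {θ φ φ' θ' : Rel2 E'} (hg : GoodT SB θ φ φ')
    (hθ' : θ' ∈ SB) (h1 : rran φ = rdom θ') (h2 : rran φ' = rran θ')
    (hcm : ∀ a b c d, (a, b) ∈ θ → (a, c) ∈ φ → (b, d) ∈ φ' → (c, d) ∈ θ') :
    θ' = psi θ φ φ' := by
  apply Set.Subset.antisymm
  · intro p hp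
    have hc : p.1 ∈ rran φ := by rw [h1]; exact mem_rdom' hp
    obtain ⟨q, hq, hq2⟩ := hc
    have hq' : (q.1, p.1) ∈ φ := by rw [← hq2]; simpa using hq
    have haθ : q.1 ∈ rdom θ := by rw [← hg.dφ]; exact ⟨(q.1, p.1), hq', rfl⟩
    obtain ⟨r, hr, hr1⟩ := haθ
    have hr' : (q.1, r.2) ∈ θ := by rw [← hr1]; simpa using hr
    have hbφ' : r.2 ∈ rdom φ' := by rw [hg.dφ']; exact ⟨(q.1, r.2), hr', rfl⟩
    obtain ⟨s, hs, hs1⟩ := hbφ'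
    have hs' : (r.2, s.2) ∈ φ' := by rw [← hs1]; simpa using hs
    have hin : (p.1, s.2) ∈ θ' := hcm _ _ _ _ hr' hq' hs'
    have : (p.1, s.2) = p := bij_eq_of_fst (fam_bij hf hθ') hin hp rfl
    rw [← this]
    exact psi_comm hr' hq' hs'
  · intro p hp
    obtain ⟨a, b, g1, g2, g3⟩ := mem_psi.1 hp
    have := hcm _ _ _ _ g2 g1 g3
    simpa using this

/-- an insertion into all three components of a triple inserts one pair into `psi`. -/
lemma psi_insert {θ φ φ' : Rel2 E'} {a b c d : E'} (ha1 : a ∉ rdom θ) (ha2 : a ∉ rdom φ)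
    (hb1 : b ∉ rran θ) (hb2 : b ∉ rdom φ') :
    psi (insert (a, b) θ) (insert (a, c) φ) (insert (b, d) φ') =
      insert (c, d) (psi θ φ φ') := by
  apply Set.Subset.antisymm
  · intro p hp
    obtain ⟨a₀, b₀, g1, g2, g3⟩ := mem_psi.1 hp
    rcases Set.mem_insert_iff.1 g2 with g2 | g2
    · have ha₀ : a₀ = a := (Prod.ext_iff.1 g2).1
      have hb₀ : b₀ = b := (Prod.ext_iff.1 g2).2
      rw [ha₀] at g1
      rw [hb₀] at g3
      rcases Set.mem_insert_iff.1 g1 with g1 | g1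
      · rcases Set.mem_insert_iff.1 g3 with g3 | g3
        · left
          exact Prod.ext (Prod.ext_iff.1 g1).2 (Prod.ext_iff.1 g3).2
        · exact absurd (mem_rdom' g3) hb2
      · exact absurd (mem_rdom' g1) ha2
    · rcases Set.mem_insert_iff.1 g1 with g1 | g1
      · have : a₀ = a := (Prod.ext_iff.1 g1).1
        rw [this] at g2
        exact absurd (mem_rdom' g2) ha1
      · rcases Set.mem_insert_iff.1 g3 with g3 | g3
        · have : b₀ = b := (Prod.ext_iff.1 g3).1
          rw [this] at g2
          exact absurd (mem_rran' g2) hb1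
        · right; exact mem_psi.2 ⟨a₀, b₀, g1, g2, g3⟩
  · intro p hp
    rcases Set.mem_insert_iff.1 hp with hp | hp
    · subst hp
      exact psi_comm (Set.mem_insert _ _) (Set.mem_insert _ _) (Set.mem_insert _ _)
    · exact psi_mono (Set.subset_insert _ _) (Set.subset_insert _ _) (Set.subset_insert _ _) hp

end AuxSq

section AuxMkT

variable {E' : Type u} {A : ES E'} {SB : Set (Rel2 E')}

/-- the member of the higher isomorphism family determined by a triple. -/
def mkT (A : ES E') (SB : Set (Rel2 E')) (θ φ φ' : Rel2 E') :
    Rel2 {p : Rel2 E' // IsPrime SB p} :=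
  {P | ∃ a b c d, (a, b) ∈ θ ∧ (a, c) ∈ φ ∧ (b, d) ∈ φ' ∧
    P.1.1 = dpr A θ (a, b) ∧ P.2.1 = dpr A (psi θ φ φ') (c, d)}

/-- the configurations of the symmetry event structure. -/
def prSub (A : ES E') (SB : Set (Rel2 E')) (θ : Rel2 E') :
    Set {p : Rel2 E' // IsPrime SB p} := {p | p.1 ∈ prS A θ}

lemma prS_sub {θ p : Rel2 E'} (hp : p ∈ prS A θ) : p ⊆ θ := by
  obtain ⟨e, he, rfl⟩ := hp; exact dpr_subset θ e

lemma rdom_pair {θ : Rel2 E'} {a : E'} (h : a ∈ rdom θ) : ∃ b, (a, b) ∈ θ := by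
  obtain ⟨p, hp, h1⟩ := h
  exact ⟨p.2, by rw [← h1]; simpa using hp⟩

lemma rran_pair {θ : Rel2 E'} {a : E'} (h : a ∈ rran θ) : ∃ b, (b, a) ∈ θ := by
  obtain ⟨p, hp, h1⟩ := h
  exact ⟨p.1, by rw [← h1]; simpa using hp⟩

lemma dpr_eq_top (hf : IsIsoFamily A SB) {θ κ : Rel2 E'} {e k : E' × E'} (hθ : θ ∈ SB)
    (hκ : κ ∈ SB) (he : e ∈ θ) (hk : k ∈ κ) (h : dpr A θ e = dpr A κ k) : e = k := by
  refine topUnique hf (fam_dpr hf hθ he) (top_dpr he) ?_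
  rw [h]; exact top_dpr hk

lemma mkT_self (hf : IsIsoFamily A SB) {θ φ φ' : Rel2 E'} (hg : GoodT SB θ φ φ')
    {a b c d : E'} (h1 : (a, b) ∈ θ) (h2 : (a, c) ∈ φ) (h3 : (b, d) ∈ φ') :
    ((⟨dpr A θ (a, b), isPrime_dpr hf hg.hθ h1⟩ : {p : Rel2 E' // IsPrime SB p}),
      (⟨dpr A (psi θ φ φ') (c, d),
        isPrime_dpr hf (psi_mem hf hg) (psi_comm h1 h2 h3)⟩ : {p : Rel2 E' // IsPrime SB p}))
      ∈ mkT A SB θ φ φ' :=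
  ⟨a, b, c, d, h1, h2, h3, rfl, rfl⟩

lemma mkT_mono (hf : IsIsoFamily A SB) {θ φ φ' κ χ χ' : Rel2 E'} (hg : GoodT SB θ φ φ')
    (hg' : GoodT SB κ χ χ') (s1 : θ ⊆ κ) (s2 : φ ⊆ χ) (s3 : φ' ⊆ χ') :
    mkT A SB θ φ φ' ⊆ mkT A SB κ χ χ' := by
  rintro P ⟨a, b, c, d, h1, h2, h3, h4, h5⟩
  refine ⟨a, b, c, d, s1 h1, s2 h2, s3 h3, ?_, ?_⟩
  · rw [h4, dpr_ambient hf hg.hθ hg'.hθ s1 h1]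
  · rw [h5, dpr_ambient hf (psi_mem hf hg) (psi_mem hf hg') (psi_mono s1 s2 s3)
      (psi_comm h1 h2 h3)]

lemma mkT_bij (hf : IsIsoFamily A SB) {θ φ φ' : Rel2 E'} (hg : GoodT SB θ φ φ') :
    relBij (mkT A SB θ φ φ') := by
  rintro P ⟨a, b, c, d, h1, h2, h3, h4, h5⟩ Q ⟨a', b', c', d', h1', h2', h3', h4', h5'⟩
  have hψ := psi_mem hf hg
  constructor
  · intro h
    have he : (a, b) = (a', b') := by
      refine dpr_eq_top hf hg.hθ hg.hθ h1 h1' ?_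
      rw [← h4, h, h4']
    have ha' : a = a' := congrArg Prod.fst he
    have hb' : b = b' := congrArg Prod.snd he
    have hc : c = c' := by
      have := bij_eq_of_fst (fam_bij hf hg.hφ) h2 h2' ha'
      exact congrArg Prod.snd this
    have hd : d = d' := by
      have := bij_eq_of_fst (fam_bij hf hg.hφ') h3 h3' hb'
      exact congrArg Prod.snd this
    apply Subtype.ext
    rw [h5, h5', hc, hd]
  · intro h
    have he : (c, d) = (c', d') := by
      refine dpr_eq_top hf hψ hψ (psi_comm h1 h2 h3) (psi_comm h1' h2' h3') ?_
      rw [← h5, h, h5']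
    have hc' : c = c' := congrArg Prod.fst he
    have hd' : d = d' := congrArg Prod.snd he
    have ha : a = a' := by
      have := bij_eq_of_snd (fam_bij hf hg.hφ) h2 h2' hc'
      exact congrArg Prod.fst this
    have hb : b = b' := by
      have := bij_eq_of_snd (fam_bij hf hg.hφ') h3 h3' hd'
      exact congrArg Prod.fst this
    apply Subtype.ext
    rw [h4, h4', ha, hb]

lemma rdom_mkT (hf : IsIsoFamily A SB) {θ φ φ' : Rel2 E'} (hg : GoodT SB θ φ φ') :
    rdom (mkT A SB θ φ φ') = prSub A SB θ := by
  ext p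
  constructor
  · rintro ⟨P, ⟨a, b, c, d, h1, h2, h3, h4, h5⟩, rfl⟩
    show (P.1 : Rel2 E') ∈ prS A θ
    rw [h4]; exact dpr_mem_prS h1
  · rintro ⟨e, he, hpe⟩
    obtain ⟨a, b⟩ := e
    obtain ⟨c, d, h2, h3⟩ := good_total hg he
    refine ⟨(p, ⟨dpr A (psi θ φ φ') (c, d), isPrime_dpr hf (psi_mem hf hg)
      (psi_comm he h2 h3)⟩), ⟨a, b, c, d, he, h2, h3, hpe, rfl⟩, rfl⟩

lemma rran_mkT (hf : IsIsoFamily A SB) {θ φ φ' : Rel2 E'} (hg : GoodT SB θ φ φ') :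
    rran (mkT A SB θ φ φ') = prSub A SB (psi θ φ φ') := by
  ext q
  constructor
  · rintro ⟨P, ⟨a, b, c, d, h1, h2, h3, h4, h5⟩, rfl⟩
    show (P.2 : Rel2 E') ∈ prS A (psi θ φ φ')
    rw [h5]; exact dpr_mem_prS (psi_comm h1 h2 h3)
  · rintro ⟨e, he, hqe⟩
    obtain ⟨c, d⟩ := e
    obtain ⟨a, b, g1, g2, g3⟩ := mem_psi.1 he
    refine ⟨(⟨dpr A θ (a, b), isPrime_dpr hf hg.hθ g2⟩, q),
      ⟨a, b, c, d, g2, g1, g3, rfl, hqe⟩, rfl⟩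

lemma mkT_sub_components (hf : IsIsoFamily A SB) {θ φ φ' κ χ χ' : Rel2 E'}
    (hg : GoodT SB θ φ φ') (hg' : GoodT SB κ χ χ')
    (h : mkT A SB θ φ φ' ⊆ mkT A SB κ χ χ') : θ ⊆ κ ∧ φ ⊆ χ ∧ φ' ⊆ χ' := by
  have hψ := psi_mem hf hg
  have hψ' := psi_mem hf hg'
  refine ⟨?_, ?_, ?_⟩
  · rintro ⟨a, b⟩ he
    obtain ⟨c, d, h2, h3⟩ := good_total hg he
    obtain ⟨a', b', c', d', g1, g2, g3, g4, g5⟩ := h (mkT_self hf hg he h2 h3)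
    have : (a, b) = (a', b') := dpr_eq_top hf hg.hθ hg'.hθ he g1 g4
    rw [this]; exact g1
  · rintro ⟨a, c⟩ h2
    have ha : a ∈ rdom θ := by rw [← hg.dφ]; exact mem_rdom' h2
    obtain ⟨b, he⟩ := rdom_pair ha
    have hb : b ∈ rdom φ' := by rw [hg.dφ']; exact mem_rran' he
    obtain ⟨d, h3⟩ := rdom_pair hb
    obtain ⟨a', b', c', d', g1, g2, g3, g4, g5⟩ := h (mkT_self hf hg he h2 h3)
    have hab : (a, b) = (a', b') := dpr_eq_top hf hg.hθ hg'.hθ he g1 g4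
    have hcd : (c, d) = (c', d') :=
      dpr_eq_top hf hψ hψ' (psi_comm he h2 h3) (psi_comm g1 g2 g3) g5
    have ha' : a = a' := congrArg Prod.fst hab
    have hc' : c = c' := congrArg Prod.fst hcd
    have : (a, c) = (a', c') := Prod.ext ha' hc'
    rw [this]; exact g2
  · rintro ⟨b, d⟩ h3
    have hb : b ∈ rran θ := by rw [← hg.dφ']; exact mem_rdom' h3
    obtain ⟨a, he⟩ := rran_pair hb
    have ha : a ∈ rdom φ := by rw [hg.dφ]; exact mem_rdom' he
    obtain ⟨c, h2⟩ := rdom_pair ha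
    obtain ⟨a', b', c', d', g1, g2, g3, g4, g5⟩ := h (mkT_self hf hg he h2 h3)
    have hab : (a, b) = (a', b') := dpr_eq_top hf hg.hθ hg'.hθ he g1 g4
    have hcd : (c, d) = (c', d') :=
      dpr_eq_top hf hψ hψ' (psi_comm he h2 h3) (psi_comm g1 g2 g3) g5
    have hb' : b = b' := congrArg Prod.snd hab
    have hd' : d = d' := congrArg Prod.snd hcd
    have : (b, d) = (b', d') := Prod.ext hb' hd'
    rw [this]; exact g3

lemma liftFam_iff (hf : IsIsoFamily A SB) {Θ : Rel2 {p : Rel2 E' // IsPrime SB p}} :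
    Θ ∈ LiftFam SB ↔ ∃ θ φ φ', GoodT SB θ φ φ' ∧ Θ = mkT A SB θ φ φ' := by
  constructor
  · rintro ⟨θ, hθ, θ', hθ', φ, hφ, φ', hφ', e1, e2, e3, e4, hcm, hΘ⟩
    have hg : GoodT SB θ φ φ' := ⟨hθ, hφ, hφ', e1, e2⟩
    have hψ : θ' = psi θ φ φ' :=
      psi_unique hf hg hθ' e3 e4 (fun a b c d g1 g2 g3 => hcm a b c d g1 g2 g3)
    refine ⟨θ, φ, φ', hg, ?_⟩
    rw [hΘ]
    ext P
    constructor
    · rintro ⟨a, b, c, d, h1, h2, h3, h4, h5⟩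
      refine ⟨a, b, c, d, h1, h2, h3, ?_, ?_⟩
      · rw [h4, famPrime_eq_dpr hf hθ h1]
      · have hcd : (c, d) ∈ θ' := hcm a b c d h1 h2 h3
        rw [h5, famPrime_eq_dpr hf hθ' hcd, hψ]
    · rintro ⟨a, b, c, d, h1, h2, h3, h4, h5⟩
      refine ⟨a, b, c, d, h1, h2, h3, ?_, ?_⟩
      · rw [h4, famPrime_eq_dpr hf hθ h1]
      · have hcd : (c, d) ∈ θ' := hcm a b c d h1 h2 h3
        rw [h5, famPrime_eq_dpr hf hθ' hcd, hψ]
  · rintro ⟨θ, φ, φ', hg, rfl⟩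
    refine ⟨θ, hg.hθ, psi θ φ φ', psi_mem hf hg, φ, hg.hφ, φ', hg.hφ', hg.dφ, hg.dφ',
      (rdom_psi hg).symm, (rran_psi hg).symm,
      fun a b c d g1 g2 g3 => psi_comm g1 g2 g3, ?_⟩
    ext P
    constructor
    · rintro ⟨a, b, c, d, h1, h2, h3, h4, h5⟩
      refine ⟨a, b, c, d, h1, h2, h3, ?_, ?_⟩
      · rw [h4, famPrime_eq_dpr hf hg.hθ h1]
      · rw [h5, famPrime_eq_dpr hf (psi_mem hf hg) (psi_comm h1 h2 h3)]
    · rintro ⟨a, b, c, d, h1, h2, h3, h4, h5⟩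
      refine ⟨a, b, c, d, h1, h2, h3, ?_, ?_⟩
      · rw [h4, famPrime_eq_dpr hf hg.hθ h1]
      · rw [h5, famPrime_eq_dpr hf (psi_mem hf hg) (psi_comm h1 h2 h3)]

lemma mkT_union (hf : IsIsoFamily A SB) {θ₁ φ₁ φ₁' θ₂ φ₂ φ₂' : Rel2 E'}
    (hg₁ : GoodT SB θ₁ φ₁ φ₁') (hg₂ : GoodT SB θ₂ φ₂ φ₂')
    (hU : GoodT SB (θ₁ ∪ θ₂) (φ₁ ∪ φ₂) (φ₁' ∪ φ₂')) :
    mkT A SB (θ₁ ∪ θ₂) (φ₁ ∪ φ₂) (φ₁' ∪ φ₂') = mkT A SB θ₁ φ₁ φ₁' ∪ mkT A SB θ₂ φ₂ φ₂' := by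
  apply Set.Subset.antisymm
  · rintro P ⟨a, b, c, d, h1, h2, h3, h4, h5⟩
    have key : ∀ (θ φ φ' : Rel2 E'), GoodT SB θ φ φ' → θ ⊆ θ₁ ∪ θ₂ → φ ⊆ φ₁ ∪ φ₂ →
        φ' ⊆ φ₁' ∪ φ₂' → (a, b) ∈ θ → P ∈ mkT A SB θ φ φ' := by
      intro θ φ φ' hg s1 s2 s3 he
      have ha : a ∈ rdom φ := by rw [hg.dφ]; exact mem_rdom' he
      obtain ⟨c₀, h2₀⟩ := rdom_pair ha
      have hc : (a, c) = (a, c₀) := bij_eq_of_fst (fam_bij hf hU.hφ) h2 (s2 h2₀) rfl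
      have h2' : (a, c) ∈ φ := by rw [hc]; exact h2₀
      have hb : b ∈ rdom φ' := by rw [hg.dφ']; exact mem_rran' he
      obtain ⟨d₀, h3₀⟩ := rdom_pair hb
      have hd : (b, d) = (b, d₀) := bij_eq_of_fst (fam_bij hf hU.hφ') h3 (s3 h3₀) rfl
      have h3' : (b, d) ∈ φ' := by rw [hd]; exact h3₀
      refine ⟨a, b, c, d, he, h2', h3', ?_, ?_⟩
      · rw [h4, dpr_ambient hf hg.hθ hU.hθ s1 he]
      · rw [h5, dpr_ambient hf (psi_mem hf hg) (psi_mem hf hU) (psi_mono s1 s2 s3)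
          (psi_comm he h2' h3')]
    rcases h1 with h1 | h1
    · exact Or.inl (key θ₁ φ₁ φ₁' hg₁ Set.subset_union_left Set.subset_union_left
        Set.subset_union_left h1)
    · exact Or.inr (key θ₂ φ₂ φ₂' hg₂ Set.subset_union_right Set.subset_union_right
        Set.subset_union_right h1)
  · rintro P (hP | hP)
    · exact mkT_mono hf hg₁ hU Set.subset_union_left Set.subset_union_left
        Set.subset_union_left hP
    · exact mkT_mono hf hg₂ hU Set.subset_union_right Set.subset_union_right
        Set.subset_union_right hP

/-- analysis of a one-pair extension of a member of the higher family. -/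
lemma insert_mkT_analysis (hf : IsIsoFamily A SB) {θ φ φ' κ χ χ' : Rel2 E'}
    (hg : GoodT SB θ φ φ') (hg' : GoodT SB κ χ χ')
    {P₁ P₂ : {p : Rel2 E' // IsPrime SB p}}
    (heq : mkT A SB κ χ χ' = insert (P₁, P₂) (mkT A SB θ φ φ'))
    (hnot : (P₁, P₂) ∉ mkT A SB θ φ φ') :
    ∃ a b c d, (a, b) ∉ θ ∧ a ∉ rdom θ ∧ b ∉ rran θ ∧ c ∉ rran φ ∧ d ∉ rran φ' ∧
      κ = insert (a, b) θ ∧ χ = insert (a, c) φ ∧ χ' = insert (b, d) φ' ∧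
      (a, b) ∈ κ ∧ (a, c) ∈ χ ∧ (b, d) ∈ χ' ∧
      P₁.1 = dpr A κ (a, b) ∧ P₂.1 = dpr A (psi κ χ χ') (c, d) := by
  have hsub : mkT A SB θ φ φ' ⊆ mkT A SB κ χ χ' := by
    rw [heq]; exact Set.subset_insert _ _
  obtain ⟨sθ, sφ, sφ'⟩ := mkT_sub_components hf hg hg' hsub
  have hPmem : (P₁, P₂) ∈ mkT A SB κ χ χ' := by rw [heq]; exact Set.mem_insert _ _
  obtain ⟨a, b, c, d, h1, h2, h3, h4, h5⟩ := hPmem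
  have hPmem : (P₁, P₂) ∈ mkT A SB κ χ χ' := ⟨a, b, c, d, h1, h2, h3, h4, h5⟩
  have habθ : (a, b) ∉ θ := by
    intro hab
    obtain ⟨c₀, d₀, g2, g3⟩ := good_total hg hab
    have hP' := mkT_self hf hg hab g2 g3
    have hfst : (⟨dpr A θ (a, b), isPrime_dpr hf hg.hθ hab⟩ :
        {p : Rel2 E' // IsPrime SB p}) = P₁ := by
      apply Subtype.ext
      show dpr A θ (a, b) = P₁.1
      rw [h4, dpr_ambient hf hg.hθ hg'.hθ sθ hab]
    have hP'κ := mkT_mono hf hg hg' sθ sφ sφ' hP'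
    have hsnd := (mkT_bij hf hg' _ hP'κ _ hPmem).1 hfst
    apply hnot
    have : ((⟨dpr A θ (a, b), isPrime_dpr hf hg.hθ hab⟩ :
        {p : Rel2 E' // IsPrime SB p}),
        (⟨dpr A (psi θ φ φ') (c₀, d₀), isPrime_dpr hf (psi_mem hf hg)
          (psi_comm hab g2 g3)⟩ : {p : Rel2 E' // IsPrime SB p})) = (P₁, P₂) :=
      Prod.ext hfst hsnd
    rwa [this] at hP'
  have ha : a ∉ rdom θ := by
    intro h
    obtain ⟨b₀, hb₀⟩ := rdom_pair h
    have : (a, b) = (a, b₀) := bij_eq_of_fst (fam_bij hf hg'.hθ) h1 (sθ hb₀) rfl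
    exact habθ (this ▸ hb₀)
  have hb : b ∉ rran θ := by
    intro h
    obtain ⟨a₀, ha₀⟩ := rran_pair h
    have : (a, b) = (a₀, b) := bij_eq_of_snd (fam_bij hf hg'.hθ) h1 (sθ ha₀) rfl
    exact habθ (this ▸ ha₀)
  have hc : c ∉ rran φ := by
    intro h
    obtain ⟨a₀, ha₀⟩ := rran_pair h
    have : (a, c) = (a₀, c) := bij_eq_of_snd (fam_bij hf hg'.hφ) h2 (sφ ha₀) rfl
    have haφ : a ∈ rdom φ := mem_rdom' (this ▸ ha₀)
    rw [hg.dφ] at haφ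
    exact ha haφ
  have hd : d ∉ rran φ' := by
    intro h
    obtain ⟨b₀, hb₀⟩ := rran_pair h
    have : (b, d) = (b₀, d) := bij_eq_of_snd (fam_bij hf hg'.hφ') h3 (sφ' hb₀) rfl
    have hbφ : b ∈ rdom φ' := mem_rdom' (this ▸ hb₀)
    rw [hg.dφ'] at hbφ
    exact hb hbφ
  have hκ : κ = insert (a, b) θ := by
    apply Set.Subset.antisymm
    · rintro ⟨x, y⟩ hxy
      obtain ⟨c₀, d₀, g2, g3⟩ := good_total hg' hxy
      have hPx := mkT_self hf hg' hxy g2 g3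
      rw [heq] at hPx
      rcases Set.mem_insert_iff.1 hPx with hPx | hPx
      · have h' : dpr A κ (x, y) = P₁.1 := by
          have := congrArg Prod.fst hPx
          exact congrArg Subtype.val this
        left
        exact dpr_eq_top hf hg'.hθ hg'.hθ hxy h1 (by rw [h', h4])
      · obtain ⟨a', b', c', d', g1', g2', g3', g4', g5'⟩ := hPx
        right
        have : (x, y) = (a', b') := dpr_eq_top hf hg'.hθ hg.hθ hxy g1' g4'
        rw [this]; exact g1'
    · rw [Set.insert_subset_iff]; exact ⟨h1, sθ⟩
  have hχ : χ = insert (a, c) φ := by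
    apply Set.Subset.antisymm
    · rintro ⟨x, y⟩ hxy
      have hx : x ∈ rdom κ := by rw [← hg'.dφ]; exact mem_rdom' hxy
      obtain ⟨w, hw⟩ := rdom_pair hx
      rw [hκ] at hw
      rcases Set.mem_insert_iff.1 hw with hw | hw
      · have hxa : x = a := (Prod.ext_iff.1 hw).1
        rw [hxa] at hxy
        have : (a, y) = (a, c) := bij_eq_of_fst (fam_bij hf hg'.hφ) hxy h2 rfl
        left; rw [← hxa] at this ⊢; exact this
      · have hxφ : x ∈ rdom φ := by rw [hg.dφ]; exact mem_rdom' hw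
        obtain ⟨y₀, hy₀⟩ := rdom_pair hxφ
        have : (x, y) = (x, y₀) := bij_eq_of_fst (fam_bij hf hg'.hφ) hxy (sφ hy₀) rfl
        right; rw [this]; exact hy₀
    · rw [Set.insert_subset_iff]; exact ⟨h2, sφ⟩
  have hχ' : χ' = insert (b, d) φ' := by
    apply Set.Subset.antisymm
    · rintro ⟨x, y⟩ hxy
      have hx : x ∈ rran κ := by rw [← hg'.dφ']; exact mem_rdom' hxy
      obtain ⟨w, hw⟩ := rran_pair hx
      rw [hκ] at hw
      rcases Set.mem_insert_iff.1 hw with hw | hw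
      · have hxb : x = b := (Prod.ext_iff.1 hw).2
        rw [hxb] at hxy
        have : (b, y) = (b, d) := bij_eq_of_fst (fam_bij hf hg'.hφ') hxy h3 rfl
        left; rw [← hxb] at this ⊢; exact this
      · have hxφ : x ∈ rdom φ' := by rw [hg.dφ']; exact mem_rran' hw
        obtain ⟨y₀, hy₀⟩ := rdom_pair hxφ
        have : (x, y) = (x, y₀) := bij_eq_of_fst (fam_bij hf hg'.hφ') hxy (sφ' hy₀) rfl
        right; rw [this]; exact hy₀
    · rw [Set.insert_subset_iff]; exact ⟨h3, sφ'⟩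
  exact ⟨a, b, c, d, habθ, ha, hb, hc, hd, hκ, hχ, hχ', h1, h2, h3, h4, h5⟩

lemma val_image_prSub (hf : IsIsoFamily A SB) {θ : Rel2 E'} (hθ : θ ∈ SB) :
    Subtype.val '' prSub A SB θ = prS A θ := by
  ext q
  constructor
  · rintro ⟨p, hp, rfl⟩; exact hp
  · intro hq; exact ⟨⟨q, prS_prime hf hθ hq⟩, hq, rfl⟩

lemma prSub_subset_imp (hf : IsIsoFamily A SB) {μ θ : Rel2 E'} (hμ : μ ∈ SB)
    (h : prSub A SB μ ⊆ prSub A SB θ) : μ ⊆ θ := by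
  apply prS_subset_imp (A := A)
  intro q hq
  have : (⟨q, prS_prime hf hμ hq⟩ : {p : Rel2 E' // IsPrime SB p}) ∈ prSub A SB μ := hq
  exact h this

lemma prSub_eq_imp (hf : IsIsoFamily A SB) {μ θ : Rel2 E'} (hμ : μ ∈ SB) (hθ : θ ∈ SB)
    (h : prSub A SB μ = prSub A SB θ) : μ = θ :=
  Set.Subset.antisymm (prSub_subset_imp hf hμ h.le) (prSub_subset_imp hf hθ h.ge)

lemma prSub_eq_union_imp (hf : IsIsoFamily A SB) {μ θ₁ θ₂ : Rel2 E'} (hμ : μ ∈ SB)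
    (hθ₁ : θ₁ ∈ SB) (hθ₂ : θ₂ ∈ SB)
    (h : prSub A SB μ = prSub A SB θ₁ ∪ prSub A SB θ₂) : μ = θ₁ ∪ θ₂ := by
  have hq : prS A μ = prS A θ₁ ∪ prS A θ₂ := by
    ext q
    constructor
    · intro hqμ
      have h0 : (⟨q, prS_prime hf hμ hqμ⟩ : {p : Rel2 E' // IsPrime SB p}) ∈ prSub A SB μ := hqμ
      exact h.le h0
    · intro hq
      rcases hq with hq | hq
      · have h0 : (⟨q, prS_prime hf hθ₁ hq⟩ : {p : Rel2 E' // IsPrime SB p}) ∈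
            prSub A SB θ₁ ∪ prSub A SB θ₂ := Or.inl hq
        exact h.ge h0
      · have h0 : (⟨q, prS_prime hf hθ₂ hq⟩ : {p : Rel2 E' // IsPrime SB p}) ∈
            prSub A SB θ₁ ∪ prSub A SB θ₂ := Or.inr hq
        exact h.ge h0
  have := congrArg Set.sUnion hq
  rwa [sUnion_prS, Set.sUnion_union, sUnion_prS, sUnion_prS] at this

lemma config_iff_prSub (hf : IsIsoFamily A SB) {P : ESP {p : Rel2 E' // IsPrime SB p}}
    (hle : ∀ p q, P.le p q ↔ p.1 ⊆ q.1)
    (hcon : ∀ X, X ∈ P.Con ↔ X.Finite ∧ ⋃₀ (Subtype.val '' X) ∈ SB)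
    {z : Set {p : Rel2 E' // IsPrime SB p}} :
    Config P.toES z ↔ ∃ θ ∈ SB, z = prSub A SB θ := by
  constructor
  · intro hz
    obtain ⟨hfin, hθ⟩ := (hcon z).1 hz.1
    refine ⟨⋃₀ (Subtype.val '' z), hθ, ?_⟩
    ext p
    constructor
    · intro hp
      exact prime_mem_prS hf p.2 hθ (Set.subset_sUnion_of_mem ⟨p, hp, rfl⟩)
    · rintro ⟨e, he, hpe⟩
      obtain ⟨y, ⟨q, hq, rfl⟩, he'⟩ := he
      have hqB : (q : Rel2 E') ∈ SB := prime_mem_fam hf q.2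
      have hsubq : (q : Rel2 E') ⊆ ⋃₀ (Subtype.val '' z) :=
        Set.subset_sUnion_of_mem ⟨q, hq, rfl⟩
      have : p.1 ⊆ q.1 := by
        rw [hpe, dpr_ambient hf hqB hθ hsubq he']
        exact dpr_subset _ e
      exact hz.2 hq ((hle p q).2 this)
  · rintro ⟨θ, hθ, rfl⟩
    constructor
    · refine (hcon _).2 ⟨?_, ?_⟩
      · refine Set.Finite.of_finite_image (f := Subtype.val) ?_
          Subtype.val_injective.injOn
        rw [val_image_prSub hf hθ]
        exact prS_finite hf hθ
      · rw [val_image_prSub hf hθ, sUnion_prS]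
        exact hθ
    · intro p hp q hq
      have hsub : q.1 ⊆ p.1 := (hle q p).1 hq
      exact prime_mem_prS hf q.2 hθ (hsub.trans (prS_sub hp))

lemma eslt_iff (hf : IsIsoFamily A SB) {T : ES {p : Rel2 E' // IsPrime SB p}}
    (hle : ∀ p q, T.le p q ↔ p.1 ⊆ q.1) {μ : Rel2 E'} {e f : E' × E'} (hμ : μ ∈ SB)
    (he : e ∈ μ) (hff : f ∈ μ) {p q : {p : Rel2 E' // IsPrime SB p}}
    (hp : p.1 = dpr A μ e) (hq : q.1 = dpr A μ f) :
    ESlt T p q ↔ ESlt A e.1 f.1 := by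
  constructor
  · rintro ⟨l, n⟩
    refine ⟨?_, ?_⟩
    · have := (hle p q).1 l
      rw [hp, hq] at this
      exact (dpr_subset_iff hf hμ he hff).1 this
    · intro hef
      apply n
      apply Subtype.ext
      rw [hp, hq, bij_eq_of_fst (fam_bij hf hμ) he hff hef]
  · rintro ⟨l, n⟩
    refine ⟨(hle p q).2 ?_, ?_⟩
    · rw [hp, hq]; exact (dpr_subset_iff hf hμ he hff).2 l
    · intro hpq
      apply n
      have h0 : dpr A μ e = dpr A μ f := by rw [← hp, ← hq, hpq]
      exact congrArg Prod.fst ((dpr_eq_iff hf hμ he hff).1 h0)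

lemma imm_iff (hf : IsIsoFamily A SB) {T : ES {p : Rel2 E' // IsPrime SB p}}
    (hle : ∀ p q, T.le p q ↔ p.1 ⊆ q.1) {μ : Rel2 E'} {e f : E' × E'} (hμ : μ ∈ SB)
    (he : e ∈ μ) (hff : f ∈ μ) {p q : {p : Rel2 E' // IsPrime SB p}}
    (hp : p.1 = dpr A μ e) (hq : q.1 = dpr A μ f) :
    Imm T p q ↔ Imm A e.1 f.1 := by
  constructor
  · rintro ⟨h1, h2⟩
    refine ⟨(eslt_iff hf hle hμ he hff hp hq).1 h1, ?_⟩
    intro s hs1 hs2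
    have hsle : A.le s f.1 := hs2.1
    have hsdom : s ∈ rdom (dpr A μ f) := by rw [rdom_dpr hf hμ hff]; exact hsle
    have hsμ : s ∈ rdom μ := rdom_mono (dpr_subset μ f) hsdom
    obtain ⟨t, ht⟩ := rdom_pair hsμ
    exact h2 ⟨dpr A μ (s, t), isPrime_dpr hf hμ ht⟩
      ((eslt_iff hf hle hμ he ht hp rfl).2 hs1)
      ((eslt_iff hf hle hμ ht hff rfl hq).2 hs2)
  · rintro ⟨h1, h2⟩
    refine ⟨(eslt_iff hf hle hμ he hff hp hq).2 h1, ?_⟩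
    intro r hr1 hr2
    have hsub : r.1 ⊆ μ := by
      have h0 : r.1 ⊆ q.1 := (hle r q).1 hr2.1
      · exact h0.trans (by rw [hq]; exact dpr_subset μ f)
    obtain ⟨g, hgμ, hrg, _⟩ := prime_eq_dpr_of_subset hf r.2 hμ hsub
    exact h2 g.1 ((eslt_iff hf hle hμ he hgμ hp hrg).1 hr1)
      ((eslt_iff hf hle hμ hgμ hff hrg hq).1 hr2)

end AuxMkT

/-- if σ is a ∼-strategy then so is the induced map σ̃ between the
symmetry event structures (primes of the isomorphism families) equipped with the
higher isomorphism families. -/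
theorem statement6 {SE AE : Type u} (S : ESP SE) (SS : Set (Rel2 SE)) (A : ESP AE)
    (SA : Set (Rel2 AE)) (hSA : IsIsoFamily A.toES SA) (hpA : PolPres A SA)
    (σ : SE → AE) (hσ : IsSimStrategy S SS A SA σ)
    (PSt : ESP {p : Rel2 SE // IsPrime SS p})
    (hStle : ∀ p q, PSt.le p q ↔ p.1 ⊆ q.1)
    (hStcon : ∀ X, X ∈ PSt.Con ↔ X.Finite ∧ ⋃₀ (Subtype.val '' X) ∈ SS)
    (hStpol : ∀ p e, PrRep SS p.1 e → PSt.pol p = S.pol e.1)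
    (PAt : ESP {p : Rel2 AE // IsPrime SA p})
    (hAtle : ∀ p q, PAt.le p q ↔ p.1 ⊆ q.1)
    (hAtcon : ∀ X, X ∈ PAt.Con ↔ X.Finite ∧ ⋃₀ (Subtype.val '' X) ∈ SA)
    (hAtpol : ∀ p e, PrRep SA p.1 e → PAt.pol p = A.pol e.1)
    (sigt : {p : Rel2 SE // IsPrime SS p} → {p : Rel2 AE // IsPrime SA p})
    (hsigt : ∀ (p : {p : Rel2 SE // IsPrime SS p}) (θ : Rel2 SE), θ ∈ SS →
      ∀ e : SE × SE, e ∈ θ → p.1 = FamPrime SS θ e →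
      (sigt p).1 = FamPrime SA (relMap σ θ) (σ e.1, σ e.2)) :
    IsSimStrategy PSt (LiftFam SS) PAt (LiftFam SA) sigt := by
  obtain ⟨hmap, hfp, hfS, hpS, hcourt, hsr, hthin⟩ := hσ
  obtain ⟨⟨hconf, hinj⟩, hpol⟩ := hmap
  -- computation of `sigt` on primes
  have SIG : ∀ (p : {p : Rel2 SE // IsPrime SS p}) (θ : Rel2 SE), θ ∈ SS →
      ∀ e : SE × SE, e ∈ θ → p.1 = dpr S.toES θ e →
      (sigt p).1 = dpr A.toES (relMap σ θ) (σ e.1, σ e.2) := by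
    intro p θ hθ e he hpe
    rw [hsigt p θ hθ e he (by rw [hpe, famPrime_eq_dpr hfS hθ he]),
      famPrime_eq_dpr hSA (hfp _ hθ) (mem_relMap' he)]
  have POL : ∀ (p : {p : Rel2 SE // IsPrime SS p}) (θ : Rel2 SE), θ ∈ SS →
      ∀ e ∈ θ, p.1 = dpr S.toES θ e → PSt.pol p = S.pol e.1 := by
    intro p θ hθ e he hpe
    exact hStpol p e ⟨θ, hθ, he, by rw [hpe, famPrime_eq_dpr hfS hθ he]⟩
  have POLA : ∀ (q : {p : Rel2 AE // IsPrime SA p}) (κ : Rel2 AE), κ ∈ SA →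
      ∀ e ∈ κ, q.1 = dpr A.toES κ e → PAt.pol q = A.pol e.1 := by
    intro q κ hκ e he hqe
    exact hAtpol q e ⟨κ, hκ, he, by rw [hqe, famPrime_eq_dpr hSA hκ he]⟩
  have MG : ∀ {θ φ φ' : Rel2 SE}, GoodT SS θ φ φ' →
      GoodT SA (relMap σ θ) (relMap σ φ) (relMap σ φ') := by
    intro θ φ φ' hg
    refine ⟨hfp _ hg.hθ, hfp _ hg.hφ, hfp _ hg.hφ', ?_, ?_⟩
    · rw [rdom_relMap, rdom_relMap, hg.dφ]
    · rw [rdom_relMap, rran_relMap, hg.dφ']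
  have MPSI : ∀ {θ φ φ' : Rel2 SE}, GoodT SS θ φ φ' →
      relMap σ (psi θ φ φ') = psi (relMap σ θ) (relMap σ φ) (relMap σ φ') := by
    intro θ φ φ' hg
    have hgσ := MG hg
    refine psi_unique hSA hgσ (hfp _ (psi_mem hfS hg)) ?_ ?_ ?_
    · rw [rran_relMap, rdom_relMap, rdom_psi hg]
    · rw [rran_relMap, rran_relMap, rran_psi hg]
    · intro x y z w h1 h2 h3
      obtain ⟨⟨a, b⟩, hab, he1⟩ := mem_relMap.1 h1
      obtain ⟨⟨a₂, c⟩, hac, he2⟩ := mem_relMap.1 h2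
      obtain ⟨⟨b₂, d⟩, hbd, he3⟩ := mem_relMap.1 h3
      have hx1 : x = σ a := congrArg Prod.fst he1
      have hy1 : y = σ b := congrArg Prod.snd he1
      have hx2 : x = σ a₂ := congrArg Prod.fst he2
      have hz3 : z = σ c := congrArg Prod.snd he2
      have hy3 : y = σ b₂ := congrArg Prod.fst he3
      have hw3 : w = σ d := congrArg Prod.snd he3
      have ha2 : a₂ = a := by
        refine hinj _ (fam_cdom hfS hg.hθ) a₂ ?_ a (mem_rdom' hab) ?_
        · rw [← hg.dφ]; exact mem_rdom' hac
        · rw [← hx2, hx1]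
      have hb2 : b₂ = b := by
        refine hinj _ (fam_cran hfS hg.hθ) b₂ ?_ b (mem_rran' hab) ?_
        · rw [← hg.dφ']; exact mem_rdom' hbd
        · rw [← hy3, hy1]
      rw [ha2] at hac
      rw [hb2] at hbd
      have hzw : (z, w) = (σ c, σ d) := Prod.ext hz3 hw3
      rw [hzw]
      exact mem_relMap' (psi_comm hab hac hbd)
  have MMKT : ∀ {θ φ φ' : Rel2 SE}, GoodT SS θ φ φ' →
      relMap sigt (mkT S.toES SS θ φ φ') =
        mkT A.toES SA (relMap σ θ) (relMap σ φ) (relMap σ φ') := by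
    intro θ φ φ' hg
    apply Set.Subset.antisymm
    · rintro P ⟨Q, ⟨a, b, c, d, h1, h2, h3, h4, h5⟩, rfl⟩
      refine ⟨σ a, σ b, σ c, σ d, mem_relMap' h1, mem_relMap' h2, mem_relMap' h3, ?_, ?_⟩
      · show (sigt Q.1).1 = _
        rw [SIG Q.1 θ hg.hθ (a, b) h1 h4]
      · show (sigt Q.2).1 = _
        rw [SIG Q.2 (psi θ φ φ') (psi_mem hfS hg) (c, d) (psi_comm h1 h2 h3) h5, MPSI hg]
    · rintro P ⟨x, y, z, w, h1, h2, h3, h4, h5⟩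
      obtain ⟨⟨a, b⟩, hab, he1⟩ := mem_relMap.1 h1
      obtain ⟨⟨a₂, c⟩, hac, he2⟩ := mem_relMap.1 h2
      obtain ⟨⟨b₂, d⟩, hbd, he3⟩ := mem_relMap.1 h3
      have hx1 : x = σ a := congrArg Prod.fst he1
      have hy1 : y = σ b := congrArg Prod.snd he1
      have hx2 : x = σ a₂ := congrArg Prod.fst he2
      have hz3 : z = σ c := congrArg Prod.snd he2
      have hy3 : y = σ b₂ := congrArg Prod.fst he3
      have hw3 : w = σ d := congrArg Prod.snd he3
      have ha2 : a₂ = a := by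
        refine hinj _ (fam_cdom hfS hg.hθ) a₂ ?_ a (mem_rdom' hab) ?_
        · rw [← hg.dφ]; exact mem_rdom' hac
        · rw [← hx2, hx1]
      have hb2 : b₂ = b := by
        refine hinj _ (fam_cran hfS hg.hθ) b₂ ?_ b (mem_rran' hab) ?_
        · rw [← hg.dφ']; exact mem_rdom' hbd
        · rw [← hy3, hy1]
      rw [ha2] at hac
      rw [hb2] at hbd
      refine ⟨(⟨dpr S.toES θ (a, b), isPrime_dpr hfS hg.hθ hab⟩,
        ⟨dpr S.toES (psi θ φ φ') (c, d),
          isPrime_dpr hfS (psi_mem hfS hg) (psi_comm hab hac hbd)⟩),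
        mkT_self hfS hg hab hac hbd, ?_⟩
      have e1 : (sigt ⟨dpr S.toES θ (a, b), isPrime_dpr hfS hg.hθ hab⟩) = P.1 := by
        apply Subtype.ext
        rw [SIG _ θ hg.hθ (a, b) hab rfl, h4, ← he1]
      have e2 : (sigt ⟨dpr S.toES (psi θ φ φ') (c, d),
          isPrime_dpr hfS (psi_mem hfS hg) (psi_comm hab hac hbd)⟩) = P.2 := by
        apply Subtype.ext
        have hzw : (z, w) = (σ c, σ d) := Prod.ext hz3 hw3
        rw [SIG _ (psi θ φ φ') (psi_mem hfS hg) (c, d) (psi_comm hab hac hbd) rfl,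
          MPSI hg, h5, hzw]
      exact Prod.ext e1 e2
  have CFGS : ∀ {z : Set {p : Rel2 SE // IsPrime SS p}},
      Config PSt.toES z ↔ ∃ θ ∈ SS, z = prSub S.toES SS θ := fun {z} =>
    config_iff_prSub hfS hStle hStcon
  have CFGA : ∀ {z : Set {p : Rel2 AE // IsPrime SA p}},
      Config PAt.toES z ↔ ∃ θ ∈ SA, z = prSub A.toES SA θ := fun {z} =>
    config_iff_prSub hSA hAtle hAtcon
  refine ⟨⟨⟨?_, ?_⟩, ?_⟩, ?_, ⟨?_, ?_, ?_, ?_, ?_, ?_⟩, ?_, ?_, ?_, ?_⟩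
  · -- image of a configuration
    intro z hz
    obtain ⟨θ, hθ, rfl⟩ := CFGS.1 hz
    refine CFGA.2 ⟨relMap σ θ, hfp _ hθ, ?_⟩
    ext q
    constructor
    · rintro ⟨p, hp, rfl⟩
      obtain ⟨e, he, hpe⟩ := hp
      show (sigt p).1 ∈ prS A.toES (relMap σ θ)
      rw [SIG p θ hθ e he hpe]
      exact dpr_mem_prS (mem_relMap' he)
    · rintro ⟨x, hx, hqx⟩
      obtain ⟨e, he, rfl⟩ := mem_relMap.1 hx
      refine ⟨⟨dpr S.toES θ e, isPrime_dpr hfS hθ he⟩, dpr_mem_prS he, ?_⟩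
      apply Subtype.ext
      rw [SIG _ θ hθ e he rfl, hqx]
  · -- local injectivity
    intro z hz p hp q hq hpq
    obtain ⟨θ, hθ, rfl⟩ := CFGS.1 hz
    obtain ⟨e, he, hpe⟩ := hp
    obtain ⟨f, hfe, hqe⟩ := hq
    have h1 : dpr A.toES (relMap σ θ) (σ e.1, σ e.2) =
        dpr A.toES (relMap σ θ) (σ f.1, σ f.2) := by
      rw [← SIG p θ hθ e he hpe, ← SIG q θ hθ f hfe hqe, hpq]
    have h2 := dpr_eq_top hSA (hfp _ hθ) (hfp _ hθ) (mem_relMap' he) (mem_relMap' hfe) h1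
    have h3 : σ e.1 = σ f.1 := congrArg Prod.fst h2
    have h4 : e.1 = f.1 := hinj _ (fam_cdom hfS hθ) _ (mem_rdom' he) _ (mem_rdom' hfe) h3
    have h5 : e = f := bij_eq_of_fst (fam_bij hfS hθ) he hfe h4
    apply Subtype.ext
    rw [hpe, hqe, h5]
  · -- polarity preservation of the map
    intro p
    obtain ⟨hpB, e, htop, hpe⟩ := prime_structure hfS p.2
    rw [POLA (sigt p) (relMap σ p.1) (hfp _ hpB) (σ e.1, σ e.2) (mem_relMap' htop.1)
      (SIG p p.1 hpB e htop.1 hpe), POL p p.1 hpB e htop.1 hpe, hpol e.1]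
  · -- family preservation
    intro Θ hΘ
    obtain ⟨θ, φ, φ', hg, rfl⟩ := (liftFam_iff hfS).1 hΘ
    rw [MMKT hg]
    exact (liftFam_iff hSA).2 ⟨_, _, _, MG hg, rfl⟩
  · -- iso family: bijections between configurations
    intro Θ hΘ
    obtain ⟨θ, φ, φ', hg, rfl⟩ := (liftFam_iff hfS).1 hΘ
    refine ⟨mkT_bij hfS hg, ?_, ?_⟩
    · rw [rdom_mkT hfS hg]
      exact CFGS.2 ⟨θ, hg.hθ, rfl⟩
    · rw [rran_mkT hfS hg]
      exact CFGS.2 ⟨psi θ φ φ', psi_mem hfS hg, rfl⟩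
  · -- identities
    intro z hz
    obtain ⟨θ, hθ, rfl⟩ := CFGS.1 hz
    have hgid : GoodT SS θ (relId (rdom θ)) (relId (rran θ)) :=
      ⟨hθ, hfS.2.1 _ (fam_cdom hfS hθ), hfS.2.1 _ (fam_cran hfS hθ),
        rdom_relId _, rdom_relId _⟩
    have hψid : θ = psi θ (relId (rdom θ)) (relId (rran θ)) := by
      refine psi_unique hfS hgid hθ (by rw [rran_relId]) (by rw [rran_relId]) ?_
      intro a b c d h1 h2 h3
      have hc : c = a := (mem_relId.1 h2).2
      have hd : d = b := (mem_relId.1 h3).2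
      rw [hc, hd]; exact h1
    refine (liftFam_iff hfS).2 ⟨θ, relId (rdom θ), relId (rran θ), hgid, ?_⟩
    ext P
    constructor
    · rintro ⟨p, hp, rfl⟩
      obtain ⟨⟨a, b⟩, he, hpe⟩ := hp
      refine ⟨a, b, a, b, he, mem_relId.2 ⟨⟨(a, b), he, rfl⟩, rfl⟩,
        mem_relId.2 ⟨⟨(a, b), he, rfl⟩, rfl⟩, hpe, ?_⟩
      show p.1 = dpr S.toES (psi θ (relId (rdom θ)) (relId (rran θ))) (a, b)
      rw [← hψid]; exact hpe
    · rintro ⟨a, b, c, d, h1, h2, h3, h4, h5⟩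
      have hc : c = a := (mem_relId.1 h2).2
      have hd : d = b := (mem_relId.1 h3).2
      have hPP : P.2 = P.1 := by
        apply Subtype.ext
        rw [h4, h5, hc, hd, ← hψid]
      refine ⟨P.1, ?_, ?_⟩
      · show P.1.1 ∈ prS S.toES θ
        rw [h4]; exact dpr_mem_prS h1
      · show (P.1, P.1) = P
        exact Prod.ext rfl hPP.symm
  · -- inverses
    intro Θ hΘ
    obtain ⟨θ, φ, φ', hg, rfl⟩ := (liftFam_iff hfS).1 hΘ
    have hgi : GoodT SS (psi θ φ φ') (relInv φ) (relInv φ') :=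
      ⟨psi_mem hfS hg, hfS.2.2.1 _ hg.hφ, hfS.2.2.1 _ hg.hφ',
        by rw [rdom_relInv, rdom_psi hg], by rw [rdom_relInv, rran_psi hg]⟩
    have hψi : θ = psi (psi θ φ φ') (relInv φ) (relInv φ') := by
      refine psi_unique hfS hgi hg.hθ (by rw [rran_relInv, hg.dφ])
        (by rw [rran_relInv, hg.dφ']) ?_
      intro c d a b h1 h2 h3
      exact psi_back2 hfS hg (mem_relInv.1 h2) (mem_relInv.1 h3) h1
    refine (liftFam_iff hfS).2 ⟨psi θ φ φ', relInv φ, relInv φ', hgi, ?_⟩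
    ext P
    constructor
    · rintro ⟨Q, ⟨a, b, c, d, h1, h2, h3, h4, h5⟩, rfl⟩
      refine ⟨c, d, a, b, psi_comm h1 h2 h3, mem_relInv.2 h2, mem_relInv.2 h3, h5, ?_⟩
      show Q.1.1 = dpr S.toES (psi (psi θ φ φ') (relInv φ) (relInv φ')) (a, b)
      rw [← hψi]; exact h4
    · rintro ⟨c, d, a, b, h1, h2, h3, h4, h5⟩
      rw [← hψi] at h5
      exact ⟨(P.2, P.1), ⟨a, b, c, d,
        psi_back2 hfS hg (mem_relInv.1 h2) (mem_relInv.1 h3) h1,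
        mem_relInv.1 h2, mem_relInv.1 h3, h5, h4⟩, rfl⟩
  · -- composition
    intro Θ₁ hΘ₁ Θ₂ hΘ₂ hrr
    obtain ⟨θ, φ, φ', hg, rfl⟩ := (liftFam_iff hfS).1 hΘ₁
    obtain ⟨κ, χ, χ', hg', rfl⟩ := (liftFam_iff hfS).1 hΘ₂
    have hψmem := psi_mem hfS hg
    have hκψ : κ = psi θ φ φ' := by
      refine (prSub_eq_imp hfS hψmem hg'.hθ ?_).symm
      rw [← rran_mkT hfS hg, ← rdom_mkT hfS hg']
      exact hrr
    subst hκψ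
    have hcc1 : rran φ = rdom χ := by rw [hg'.dφ, rdom_psi hg]
    have hcc2 : rran φ' = rdom χ' := by rw [hg'.dφ', rran_psi hg]
    have hcg : GoodT SS θ (relComp φ χ) (relComp φ' χ') := by
      refine ⟨hg.hθ, hfS.2.2.2.1 _ hg.hφ _ hg'.hφ hcc1,
        hfS.2.2.2.1 _ hg.hφ' _ hg'.hφ' hcc2, ?_, ?_⟩
      · rw [rdom_relComp hcc1, hg.dφ]
      · rw [rdom_relComp hcc2, hg.dφ']
    have hψc : psi (psi θ φ φ') χ χ' = psi θ (relComp φ χ) (relComp φ' χ') := by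
      refine psi_unique hfS hcg (psi_mem hfS hg') ?_ ?_ ?_
      · rw [rran_relComp hcc1, rdom_psi hg']
      · rw [rran_relComp hcc2, rran_psi hg']
      · intro a b e f h1 h2 h3
        obtain ⟨c, hc1, hc2⟩ := h2
        obtain ⟨d, hd1, hd2⟩ := h3
        exact psi_comm (psi_comm h1 hc1 hd1) hc2 hd2
    refine (liftFam_iff hfS).2 ⟨θ, relComp φ χ, relComp φ' χ', hcg, ?_⟩
    ext P
    constructor
    · rintro ⟨Q, hQ1, hQ2⟩
      obtain ⟨a, b, c, d, g1, g2, g3, g4, g5⟩ := hQ1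
      obtain ⟨c₂, d₂, e, f, k1, k2, k3, k4, k5⟩ := hQ2
      have hk : dpr S.toES (psi θ φ φ') (c, d) = dpr S.toES (psi θ φ φ') (c₂, d₂) :=
        (g5.symm.trans k4 :)
      have hcd : (c, d) = (c₂, d₂) :=
        dpr_eq_top hfS hψmem hψmem (psi_comm g1 g2 g3) k1 hk
      have hc : c = c₂ := congrArg Prod.fst hcd
      have hd : d = d₂ := congrArg Prod.snd hcd
      rw [← hc] at k2
      rw [← hd] at k3
      refine ⟨a, b, e, f, g1, ⟨c, g2, k2⟩, ⟨d, g3, k3⟩, g4, ?_⟩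
      rw [k5, hψc]
    · rintro ⟨a, b, e, f, h1, h2, h3, h4, h5⟩
      obtain ⟨c, hc1, hc2⟩ := h2
      obtain ⟨d, hd1, hd2⟩ := h3
      refine ⟨⟨dpr S.toES (psi θ φ φ') (c, d), isPrime_dpr hfS hψmem
        (psi_comm h1 hc1 hd1)⟩, ⟨a, b, c, d, h1, hc1, hd1, h4, rfl⟩,
        ⟨c, d, e, f, psi_comm h1 hc1 hd1, hc2, hd2, rfl, by rw [h5, hψc]⟩⟩
  · -- restrictions
    intro Θ hΘ x hx hxsub
    obtain ⟨θ, φ, φ', hg, rfl⟩ := (liftFam_iff hfS).1 hΘ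
    obtain ⟨μ, hμ, rfl⟩ := CFGS.1 hx
    rw [rdom_mkT hfS hg] at hxsub
    have hsubμ : μ ⊆ θ := prSub_subset_imp hfS hμ hxsub
    have hrφ : relRestrict φ (rdom μ) ∈ SS := by
      refine fam_restrict hfS hg.hφ (fam_cdom hfS hμ) ?_
      rw [hg.dφ]; exact rdom_mono hsubμ
    have hrφ' : relRestrict φ' (rran μ) ∈ SS := by
      refine fam_restrict hfS hg.hφ' (fam_cran hfS hμ) ?_
      rw [hg.dφ']; exact rran_mono hsubμ
    have hgr : GoodT SS μ (relRestrict φ (rdom μ)) (relRestrict φ' (rran μ)) := by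
      refine ⟨hμ, hrφ, hrφ', ?_, ?_⟩
      · exact rdom_relRestrict (by rw [hg.dφ]; exact rdom_mono hsubμ)
      · exact rdom_relRestrict (by rw [hg.dφ']; exact rran_mono hsubμ)
    refine (liftFam_iff hfS).2 ⟨μ, _, _, hgr, ?_⟩
    ext P
    constructor
    · rintro ⟨hPΘ, hPx⟩
      obtain ⟨a, b, c, d, h1, h2, h3, h4, h5⟩ := hPΘ
      obtain ⟨e₀, he₀, hpe₀⟩ := hPx
      have habe : (a, b) = e₀ :=
        dpr_eq_top hfS hg.hθ hμ h1 he₀ (by rw [← h4, hpe₀])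
      have habμ : (a, b) ∈ μ := by rw [habe]; exact he₀
      have h2' : (a, c) ∈ relRestrict φ (rdom μ) := ⟨h2, ⟨(a, b), habμ, rfl⟩⟩
      have h3' : (b, d) ∈ relRestrict φ' (rran μ) := ⟨h3, ⟨(a, b), habμ, rfl⟩⟩
      refine ⟨a, b, c, d, habμ, h2', h3', ?_, ?_⟩
      · rw [h4, dpr_ambient hfS hμ hg.hθ hsubμ habμ]
      · rw [h5, dpr_ambient hfS (psi_mem hfS hgr) (psi_mem hfS hg)
          (psi_mono hsubμ (relRestrict_subset _ _) (relRestrict_subset _ _))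
          (psi_comm habμ h2' h3')]
    · rintro ⟨a, b, c, d, h1, h2, h3, h4, h5⟩
      refine ⟨⟨a, b, c, d, hsubμ h1, h2.1, h3.1, ?_, ?_⟩, ?_⟩
      · rw [h4, dpr_ambient hfS hμ hg.hθ hsubμ h1]
      · rw [h5, dpr_ambient hfS (psi_mem hfS hgr) (psi_mem hfS hg)
          (psi_mono hsubμ (relRestrict_subset _ _) (relRestrict_subset _ _))
          (psi_comm h1 h2 h3)]
      · show P.1.1 ∈ prS S.toES μ
        rw [h4]; exact dpr_mem_prS h1
  · -- extensions
    intro Θ hΘ x' hx' hsub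
    obtain ⟨θ, φ, φ', hg, rfl⟩ := (liftFam_iff hfS).1 hΘ
    obtain ⟨μ', hμ', rfl⟩ := CFGS.1 hx'
    rw [rdom_mkT hfS hg] at hsub
    have hθμ : θ ⊆ μ' := prSub_subset_imp hfS hg.hθ hsub
    obtain ⟨Φ, hΦ, hφΦ, hΦdom⟩ := hfS.2.2.2.2.2 φ hg.hφ (rdom μ') (fam_cdom hfS hμ')
      (by rw [hg.dφ]; exact rdom_mono hθμ)
    obtain ⟨Φ', hΦ', hφΦ', hΦ'dom⟩ := hfS.2.2.2.2.2 φ' hg.hφ' (rran μ')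
      (fam_cran hfS hμ') (by rw [hg.dφ']; exact rran_mono hθμ)
    have hgE : GoodT SS μ' Φ Φ' := ⟨hμ', hΦ, hΦ', hΦdom, hΦ'dom⟩
    exact ⟨mkT S.toES SS μ' Φ Φ', (liftFam_iff hfS).2 ⟨_, _, _, hgE, rfl⟩,
      mkT_mono hfS hg hgE hθμ hφΦ hφΦ', by rw [rdom_mkT hfS hgE]⟩
  · -- polarity preservation of the family
    intro Θ hΘ P hP
    obtain ⟨θ, φ, φ', hg, rfl⟩ := (liftFam_iff hfS).1 hΘ
    obtain ⟨a, b, c, d, h1, h2, h3, h4, h5⟩ := hP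
    rw [POL P.1 θ hg.hθ (a, b) h1 h4,
      POL P.2 (psi θ φ φ') (psi_mem hfS hg) (c, d) (psi_comm h1 h2 h3) h5]
    exact hpS φ hg.hφ (a, c) h2
  · -- courtesy
    intro p q hImm hpolc
    obtain ⟨hqB, f, hqtop, hqe⟩ := prime_structure hfS q.2
    have hpq : p.1 ⊆ q.1 := (hStle p q).1 hImm.1.1
    obtain ⟨e, heq, hpe, _⟩ := prime_eq_dpr_of_subset hfS p.2 hqB hpq
    have hImmS : Imm S.toES e.1 f.1 :=
      (imm_iff hfS hStle hqB heq hqtop.1 hpe hqe).1 hImm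
    have hpolc' : S.pol e.1 = true ∨ S.pol f.1 = false := by
      rcases hpolc with h | h
      · left; rw [← POL p q.1 hqB e heq hpe]; exact h
      · right; rw [← POL q q.1 hqB f hqtop.1 hqe]; exact h
    have hImmA := hcourt _ _ hImmS hpolc'
    exact (imm_iff hSA hAtle (hfp _ hqB) (mem_relMap' heq) (mem_relMap' hqtop.1)
      (SIG p q.1 hqB e heq hpe) (SIG q q.1 hqB f hqtop.1 hqe)).2 hImmA
  · -- strong receptivity
    intro Θ hΘ P₁ P₂ hneg1 hneg2 hnotin hins
    obtain ⟨θ, φ, φ', hg, rfl⟩ := (liftFam_iff hfS).1 hΘ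
    rw [MMKT hg] at hnotin hins
    have hgσ := MG hg
    obtain ⟨κ, χ, χ', hgκ, hκeq⟩ := (liftFam_iff hSA).1 hins
    obtain ⟨g₁, h₁, g₂, h₂, hnotθσ, hg₁σ, hh₁σ, hg₂σ, hh₂σ, hκI, hχI, hχ'I,
      hmemκ, hmemχ, hmemχ', hP₁, hP₂⟩ := insert_mkT_analysis hSA hgσ hgκ hκeq.symm hnotin
    have pol_g₁ : A.pol g₁ = false := by
      rw [← POLA P₁ κ hgκ.hθ (g₁, h₁) hmemκ hP₁]; exact hneg1
    have pol_h₁ : A.pol h₁ = false := by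
      rw [← hpA κ hgκ.hθ (g₁, h₁) hmemκ]; exact pol_g₁
    have pol_g₂ : A.pol g₂ = false := by
      rw [← POLA P₂ (psi κ χ χ') (psi_mem hSA hgκ) (g₂, h₂)
        (psi_comm hmemκ hmemχ hmemχ') hP₂]
      exact hneg2
    have pol_h₂ : A.pol h₂ = false := by
      rw [← hpA (psi κ χ χ') (psi_mem hSA hgκ) (g₂, h₂)
        (psi_comm hmemκ hmemχ hmemχ')]
      exact pol_g₂
    -- three applications of strong receptivity of σ
    obtain ⟨⟨s₁, s₂⟩, ⟨hθp, hs₁, hs₂⟩, huniq1⟩ :=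
      hsr θ hg.hθ g₁ h₁ pol_g₁ pol_h₁ hnotθσ (by rw [← hκI]; exact hgκ.hθ)
    have hs₁d : s₁ ∉ rdom θ := fun h =>
      hg₁σ (by rw [rdom_relMap]; exact ⟨s₁, h, hs₁⟩)
    have hs₂r : s₂ ∉ rran θ := fun h =>
      hh₁σ (by rw [rran_relMap]; exact ⟨s₂, h, hs₂⟩)
    have hng2 : (g₁, g₂) ∉ relMap σ φ := fun h =>
      hg₁σ (by rw [← hgσ.dφ]; exact mem_rdom' h)
    obtain ⟨⟨u₁, u₂⟩, ⟨hφp, hu₁, hu₂⟩, huniq2⟩ :=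
      hsr φ hg.hφ g₁ g₂ pol_g₁ pol_g₂ hng2 (by rw [← hχI]; exact hgκ.hφ)
    have hng3 : (h₁, h₂) ∉ relMap σ φ' := fun h =>
      hh₁σ (by rw [← hgσ.dφ']; exact mem_rdom' h)
    obtain ⟨⟨v₁, v₂⟩, ⟨hφ'p, hv₁, hv₂⟩, huniq3⟩ :=
      hsr φ' hg.hφ' h₁ h₂ pol_h₁ pol_h₂ hng3 (by rw [← hχ'I]; exact hgκ.hφ')
    -- the identity trick: u₁ = s₁
    have hids : relId (rdom θ) ∈ SS := hfS.2.1 _ (fam_cdom hfS hg.hθ)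
    have hnid : (g₁, g₁) ∉ relMap σ (relId (rdom θ)) := by
      rw [relMap_relId]
      intro h
      apply hg₁σ
      rw [rdom_relMap]
      exact (mem_relId.1 h).1
    have hinsid : insert (g₁, g₁) (relMap σ (relId (rdom θ))) ∈ SA := by
      rw [relMap_relId, ← relId_insert]
      have hx : insert g₁ (σ '' rdom θ) = rdom κ := by
        rw [hκI, rdom_insert, rdom_relMap]
      rw [hx]
      exact hSA.2.1 _ (fam_cdom hSA hgκ.hθ)
    obtain ⟨t, ht, huniq4⟩ :=
      hsr (relId (rdom θ)) hids g₁ g₁ pol_g₁ pol_g₁ hnid hinsid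
    have cand1 : insert (s₁, s₁) (relId (rdom θ)) ∈ SS := by
      rw [← relId_insert]
      have hx : insert s₁ (rdom θ) = rdom (insert (s₁, s₂) θ) :=
        (rdom_insert (s₁, s₂) θ).symm
      rw [hx]
      exact hfS.2.1 _ (fam_cdom hfS hθp)
    have cand2 : insert (u₁, u₁) (relId (rdom θ)) ∈ SS := by
      rw [← relId_insert]
      have hx : insert u₁ (rdom θ) = rdom (insert (u₁, u₂) φ) := by
        rw [rdom_insert, hg.dφ]
      rw [hx]
      exact hfS.2.1 _ (fam_cdom hfS hφp)
    have e4 := huniq4 (s₁, s₁) ⟨cand1, hs₁, hs₁⟩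
    have e5 := huniq4 (u₁, u₁) ⟨cand2, hu₁, hu₁⟩
    have hu₁s : u₁ = s₁ := congrArg Prod.fst (e5.trans e4.symm)
    rw [hu₁s] at hφp huniq2
    -- the identity trick on ranges: v₁ = s₂
    have hidr : relId (rran θ) ∈ SS := hfS.2.1 _ (fam_cran hfS hg.hθ)
    have hnidr : (h₁, h₁) ∉ relMap σ (relId (rran θ)) := by
      rw [relMap_relId]
      intro h
      apply hh₁σ
      rw [rran_relMap]
      exact (mem_relId.1 h).1
    have hinsidr : insert (h₁, h₁) (relMap σ (relId (rran θ))) ∈ SA := by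
      rw [relMap_relId, ← relId_insert]
      have hx : insert h₁ (σ '' rran θ) = rran κ := by
        rw [hκI, rran_insert, rran_relMap]
      rw [hx]
      exact hSA.2.1 _ (fam_cran hSA hgκ.hθ)
    obtain ⟨t', ht', huniq5⟩ :=
      hsr (relId (rran θ)) hidr h₁ h₁ pol_h₁ pol_h₁ hnidr hinsidr
    have cand3 : insert (s₂, s₂) (relId (rran θ)) ∈ SS := by
      rw [← relId_insert]
      have hx : insert s₂ (rran θ) = rran (insert (s₁, s₂) θ) :=
        (rran_insert (s₁, s₂) θ).symm
      rw [hx]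
      exact hfS.2.1 _ (fam_cran hfS hθp)
    have cand4 : insert (v₁, v₁) (relId (rran θ)) ∈ SS := by
      rw [← relId_insert]
      have hx : insert v₁ (rran θ) = rdom (insert (v₁, v₂) φ') := by
        rw [rdom_insert, hg.dφ']
      rw [hx]
      exact hfS.2.1 _ (fam_cdom hfS hφ'p)
    have e6 := huniq5 (s₂, s₂) ⟨cand3, hs₂, hs₂⟩
    have e7 := huniq5 (v₁, v₁) ⟨cand4, hv₁, hv₁⟩
    have hv₁s : v₁ = s₂ := congrArg Prod.fst (e7.trans e6.symm)
    rw [hv₁s] at hφ'p huniq3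
    -- the extended triple
    have hgP : GoodT SS (insert (s₁, s₂) θ) (insert (s₁, u₂) φ) (insert (s₂, v₂) φ') := by
      refine ⟨hθp, hφp, hφ'p, ?_, ?_⟩
      · rw [rdom_insert, rdom_insert, hg.dφ]
      · rw [rdom_insert, rran_insert, hg.dφ']
    have hψP : psi (insert (s₁, s₂) θ) (insert (s₁, u₂) φ) (insert (s₂, v₂) φ') =
        insert (u₂, v₂) (psi θ φ φ') :=
      psi_insert hs₁d (by rw [hg.dφ]; exact hs₁d) hs₂r (by rw [hg.dφ']; exact hs₂r)
    have huvP : (u₂, v₂) ∈ psi (insert (s₁, s₂) θ) (insert (s₁, u₂) φ)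
        (insert (s₂, v₂) φ') :=
      psi_comm (Set.mem_insert _ _) (Set.mem_insert _ _) (Set.mem_insert _ _)
    set p₁ : {p : Rel2 SE // IsPrime SS p} :=
      ⟨dpr S.toES (insert (s₁, s₂) θ) (s₁, s₂),
        isPrime_dpr hfS hθp (Set.mem_insert _ _)⟩ with hp₁def
    set p₂ : {p : Rel2 SE // IsPrime SS p} :=
      ⟨dpr S.toES (psi (insert (s₁, s₂) θ) (insert (s₁, u₂) φ) (insert (s₂, v₂) φ'))
        (u₂, v₂), isPrime_dpr hfS (psi_mem hfS hgP) huvP⟩ with hp₂def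
    have hSET : mkT S.toES SS (insert (s₁, s₂) θ) (insert (s₁, u₂) φ)
        (insert (s₂, v₂) φ') = insert (p₁, p₂) (mkT S.toES SS θ φ φ') := by
      apply Set.Subset.antisymm
      · rintro P ⟨a, b, c, d, h1, h2, h3, h4, h5⟩
        rcases Set.mem_insert_iff.1 h1 with h1 | h1
        · have ea : a = s₁ := congrArg Prod.fst h1
          have eb : b = s₂ := congrArg Prod.snd h1
          rcases Set.mem_insert_iff.1 h2 with h2 | h2
          · have ec : c = u₂ := congrArg Prod.snd h2
            rcases Set.mem_insert_iff.1 h3 with h3 | h3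
            · have ed : d = v₂ := congrArg Prod.snd h3
              left
              have q1 : P.1 = p₁ := Subtype.ext (by rw [h4, ea, eb])
              have q2 : P.2 = p₂ := Subtype.ext (by rw [h5, ec, ed])
              show P = (p₁, p₂)
              calc P = (P.1, P.2) := rfl
                _ = (p₁, p₂) := by rw [q1, q2]
            · exfalso
              have hbm : b ∈ rdom φ' := mem_rdom' h3
              rw [hg.dφ', eb] at hbm
              exact hs₂r hbm
          · exfalso
            have ham : a ∈ rdom φ := mem_rdom' h2
            rw [hg.dφ, ea] at ham
            exact hs₁d ham
        · rcases Set.mem_insert_iff.1 h2 with h2 | h2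
          · exfalso
            have ea : a = s₁ := congrArg Prod.fst h2
            have : a ∈ rdom θ := mem_rdom' h1
            rw [ea] at this
            exact hs₁d this
          · rcases Set.mem_insert_iff.1 h3 with h3 | h3
            · exfalso
              have eb : b = s₂ := congrArg Prod.fst h3
              have : b ∈ rran θ := mem_rran' h1
              rw [eb] at this
              exact hs₂r this
            · right
              refine ⟨a, b, c, d, h1, h2, h3, ?_, ?_⟩
              · rw [h4, dpr_ambient hfS hg.hθ hθp (Set.subset_insert _ _) h1]
              · rw [h5, dpr_ambient hfS (psi_mem hfS hg) (psi_mem hfS hgP)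
                  (psi_mono (Set.subset_insert _ _) (Set.subset_insert _ _)
                    (Set.subset_insert _ _)) (psi_comm h1 h2 h3)]
      · intro P hP
        rcases Set.mem_insert_iff.1 hP with hP | hP
        · rw [hP]
          exact ⟨s₁, s₂, u₂, v₂, Set.mem_insert _ _, Set.mem_insert _ _,
            Set.mem_insert _ _, rfl, rfl⟩
        · exact mkT_mono hfS hg hgP (Set.subset_insert _ _) (Set.subset_insert _ _)
            (Set.subset_insert _ _) hP
    have hLF : insert (p₁, p₂) (mkT S.toES SS θ φ φ') ∈ LiftFam SS := by
      rw [← hSET]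
      exact (liftFam_iff hfS).2 ⟨_, _, _, hgP, rfl⟩
    have hψκ : psi κ χ χ' =
        insert (g₂, h₂) (psi (relMap σ θ) (relMap σ φ) (relMap σ φ')) := by
      rw [hκI, hχI, hχ'I]
      exact psi_insert hg₁σ (by rw [hgσ.dφ]; exact hg₁σ) hh₁σ
        (by rw [hgσ.dφ']; exact hh₁σ)
    have hsig1 : sigt p₁ = P₁ := by
      apply Subtype.ext
      rw [SIG p₁ (insert (s₁, s₂) θ) hθp (s₁, s₂) (Set.mem_insert _ _) rfl]
      have hre : ((σ (s₁, s₂).1, σ (s₁, s₂).2) : AE × AE) = (g₁, h₁) :=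
        Prod.ext hs₁ hs₂
      rw [relMap_insert, hre, ← hκI, hP₁]
    have hsig2 : sigt p₂ = P₂ := by
      apply Subtype.ext
      rw [SIG p₂ (psi (insert (s₁, s₂) θ) (insert (s₁, u₂) φ) (insert (s₂, v₂) φ'))
        (psi_mem hfS hgP) (u₂, v₂) huvP rfl]
      have hre : ((σ (u₂, v₂).1, σ (u₂, v₂).2) : AE × AE) = (g₂, h₂) :=
        Prod.ext hu₂ hv₂
      rw [hψP, relMap_insert, hre, MPSI hg, ← hψκ, hP₂]
    refine ⟨(p₁, p₂), ⟨hLF, hsig1, hsig2⟩, ?_⟩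
    rintro ⟨q₁, q₂⟩ ⟨hqLF, hq1, hq2⟩
    have hqnot : (q₁, q₂) ∉ mkT S.toES SS θ φ φ' := by
      intro hmem
      apply hnotin
      have himg := mem_relMap' (f := sigt) hmem
      rw [MMKT hg] at himg
      rw [← hq1, ← hq2]
      exact himg
    obtain ⟨θh, φh, φ'h, hgh, hqrep⟩ := (liftFam_iff hfS).1 hqLF
    obtain ⟨t₁, t₂, c3, d3, hhnot, hh1d, hh2r, hhcr, hhdr, hhk, hhx1, hhx2,
      hhm1, hhm2, hhm3, hhq1, hhq2⟩ := insert_mkT_analysis hfS hg hgh hqrep.symm hqnot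
    have hσq1 : dpr A.toES (relMap σ θh) (σ (t₁, t₂).1, σ (t₁, t₂).2) =
        dpr A.toES κ (g₁, h₁) := by
      rw [← SIG q₁ θh hgh.hθ (t₁, t₂) hhm1 hhq1, hq1, hP₁]
    have htop1 : ((σ (t₁, t₂).1, σ (t₁, t₂).2) : AE × AE) = (g₁, h₁) :=
      dpr_eq_top hSA (hfp _ hgh.hθ) hgκ.hθ (mem_relMap' hhm1) hmemκ hσq1
    have eσ1 : σ t₁ = g₁ := congrArg Prod.fst htop1
    have eσ2 : σ t₂ = h₁ := congrArg Prod.snd htop1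
    have hteq : (t₁, t₂) = (s₁, s₂) := by
      refine huniq1 (t₁, t₂) ⟨?_, eσ1, eσ2⟩
      rw [← hhk]; exact hgh.hθ
    have es1 : t₁ = s₁ := congrArg Prod.fst hteq
    have es2 : t₂ = s₂ := congrArg Prod.snd hteq
    have hσq2 : dpr A.toES (relMap σ (psi θh φh φ'h)) (σ (c3, d3).1, σ (c3, d3).2) =
        dpr A.toES (psi κ χ χ') (g₂, h₂) := by
      rw [← SIG q₂ (psi θh φh φ'h) (psi_mem hfS hgh) (c3, d3)
        (psi_comm hhm1 hhm2 hhm3) hhq2, hq2, hP₂]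
    have htop2 : ((σ (c3, d3).1, σ (c3, d3).2) : AE × AE) = (g₂, h₂) :=
      dpr_eq_top hSA (hfp _ (psi_mem hfS hgh)) (psi_mem hSA hgκ)
        (mem_relMap' (psi_comm hhm1 hhm2 hhm3)) (psi_comm hmemκ hmemχ hmemχ') hσq2
    have eσ3 : σ c3 = g₂ := congrArg Prod.fst htop2
    have eσ4 : σ d3 = h₂ := congrArg Prod.snd htop2
    have hceq : (t₁, c3) = (s₁, u₂) := by
      refine huniq2 (t₁, c3) ⟨?_, eσ1, eσ3⟩
      rw [← hhx1]
      exact hgh.hφ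
    have ec : c3 = u₂ := congrArg Prod.snd hceq
    have hdeq : (t₂, d3) = (s₂, v₂) := by
      refine huniq3 (t₂, d3) ⟨?_, eσ2, eσ4⟩
      rw [← hhx2]
      exact hgh.hφ'
    have ed : d3 = v₂ := congrArg Prod.snd hdeq
    have q1e : q₁ = p₁ := Subtype.ext (by rw [hhq1, hhk, es1, es2, hp₁def])
    have q2e : q₂ = p₂ :=
      Subtype.ext (by rw [hhq2, hhk, hhx1, hhx2, es1, es2, ec, ed, hp₂def])
    show ((q₁, q₂) : _ × _) = (p₁, p₂)
    rw [q1e, q2e]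
  · -- thin
    intro Θ hΘ Θ₁ hΘ₁ Θ₂ hΘ₂ hpe1 hpe2 hcfg
    obtain ⟨θ, φ, φ', hg, rfl⟩ := (liftFam_iff hfS).1 hΘ
    obtain ⟨θ₁, φ₁, φ₁', hg₁, rfl⟩ := (liftFam_iff hfS).1 hΘ₁
    obtain ⟨θ₂, φ₂, φ₂', hg₂, rfl⟩ := (liftFam_iff hfS).1 hΘ₂
    have EXTRACT : ∀ (θ' φA φB : Rel2 SE) (hg' : GoodT SS θ' φA φB),
        PosRelExt PSt (mkT S.toES SS θ φ φ') (mkT S.toES SS θ' φA φB) →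
        PosRelExt S θ θ' ∧ PosRelExt S φ φA ∧ PosRelExt S φ' φB := by
      intro θ' φA φB hg' hpe
      obtain ⟨sθ, sφ, sφ'⟩ := mkT_sub_components hfS hg hg' hpe.1
      refine ⟨⟨sθ, ?_⟩, ⟨sφ, ?_⟩, ⟨sφ', ?_⟩⟩
      · rintro ⟨a, b⟩ he hne
        obtain ⟨c, d, h2, h3⟩ := good_total hg' he
        have hP := mkT_self hfS hg' he h2 h3
        have hPn : (⟨dpr S.toES θ' (a, b), isPrime_dpr hfS hg'.hθ he⟩,
            (⟨dpr S.toES (psi θ' φA φB) (c, d), isPrime_dpr hfS (psi_mem hfS hg')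
              (psi_comm he h2 h3)⟩ : {p : Rel2 SE // IsPrime SS p})) ∉
            mkT S.toES SS θ φ φ' := by
          rintro ⟨a₀, b₀, c₀, d₀, g1, g2, g3, g4, g5⟩
          have : (a, b) = (a₀, b₀) := dpr_eq_top hfS hg'.hθ hg.hθ he g1 g4
          exact hne (this ▸ g1)
        obtain ⟨hp1, hp2⟩ := hpe.2 _ hP hPn
        have e1 : S.pol a = true := by
          rw [← POL ⟨dpr S.toES θ' (a, b), isPrime_dpr hfS hg'.hθ he⟩ θ' hg'.hθ (a, b) he rfl]; exact hp1
        have e2 : S.pol b = true := by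
          rw [← hpS θ' hg'.hθ (a, b) he]; exact e1
        exact ⟨e1, e2⟩
      · rintro ⟨a, c⟩ h2 hne
        have ha : a ∈ rdom θ' := by rw [← hg'.dφ]; exact mem_rdom' h2
        obtain ⟨b, he⟩ := rdom_pair ha
        have hb : b ∈ rdom φB := by rw [hg'.dφ']; exact mem_rran' he
        obtain ⟨d, h3⟩ := rdom_pair hb
        have hP := mkT_self hfS hg' he h2 h3
        have hPn : (⟨dpr S.toES θ' (a, b), isPrime_dpr hfS hg'.hθ he⟩,
            (⟨dpr S.toES (psi θ' φA φB) (c, d), isPrime_dpr hfS (psi_mem hfS hg')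
              (psi_comm he h2 h3)⟩ : {p : Rel2 SE // IsPrime SS p})) ∉
            mkT S.toES SS θ φ φ' := by
          rintro ⟨a₀, b₀, c₀, d₀, g1, g2, g3, g4, g5⟩
          have hab : (a, b) = (a₀, b₀) := dpr_eq_top hfS hg'.hθ hg.hθ he g1 g4
          have hcd : (c, d) = (c₀, d₀) := dpr_eq_top hfS (psi_mem hfS hg')
            (psi_mem hfS hg) (psi_comm he h2 h3) (psi_comm g1 g2 g3) g5
          have ea : a = a₀ := congrArg Prod.fst hab
          have ec : c = c₀ := congrArg Prod.fst hcd
          have : (a, c) = (a₀, c₀) := Prod.ext ea ec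
          exact hne (this ▸ g2)
        obtain ⟨hp1, hp2⟩ := hpe.2 _ hP hPn
        have e1 : S.pol a = true := by
          rw [← POL ⟨dpr S.toES θ' (a, b), isPrime_dpr hfS hg'.hθ he⟩ θ' hg'.hθ (a, b) he rfl]; exact hp1
        have e2 : S.pol c = true := by
          rw [← POL ⟨dpr S.toES (psi θ' φA φB) (c, d), isPrime_dpr hfS (psi_mem hfS hg')
            (psi_comm he h2 h3)⟩ (psi θ' φA φB) (psi_mem hfS hg') (c, d)
            (psi_comm he h2 h3) rfl]
          exact hp2
        exact ⟨e1, e2⟩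
      · rintro ⟨b, d⟩ h3 hne
        have hb : b ∈ rran θ' := by rw [← hg'.dφ']; exact mem_rdom' h3
        obtain ⟨a, he⟩ := rran_pair hb
        have ha : a ∈ rdom φA := by rw [hg'.dφ]; exact mem_rdom' he
        obtain ⟨c, h2⟩ := rdom_pair ha
        have hP := mkT_self hfS hg' he h2 h3
        have hPn : (⟨dpr S.toES θ' (a, b), isPrime_dpr hfS hg'.hθ he⟩,
            (⟨dpr S.toES (psi θ' φA φB) (c, d), isPrime_dpr hfS (psi_mem hfS hg')
              (psi_comm he h2 h3)⟩ : {p : Rel2 SE // IsPrime SS p})) ∉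
            mkT S.toES SS θ φ φ' := by
          rintro ⟨a₀, b₀, c₀, d₀, g1, g2, g3, g4, g5⟩
          have hab : (a, b) = (a₀, b₀) := dpr_eq_top hfS hg'.hθ hg.hθ he g1 g4
          have hcd : (c, d) = (c₀, d₀) := dpr_eq_top hfS (psi_mem hfS hg')
            (psi_mem hfS hg) (psi_comm he h2 h3) (psi_comm g1 g2 g3) g5
          have eb : b = b₀ := congrArg Prod.snd hab
          have ed : d = d₀ := congrArg Prod.snd hcd
          have : (b, d) = (b₀, d₀) := Prod.ext eb ed
          exact hne (this ▸ g3)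
        obtain ⟨hp1, hp2⟩ := hpe.2 _ hP hPn
        have e1 : S.pol b = true := by
          rw [← hpS θ' hg'.hθ (a, b) he, ← POL ⟨dpr S.toES θ' (a, b), isPrime_dpr hfS hg'.hθ he⟩ θ' hg'.hθ (a, b) he rfl]; exact hp1
        have e2 : S.pol d = true := by
          rw [← hpS (psi θ' φA φB) (psi_mem hfS hg') (c, d) (psi_comm he h2 h3),
            ← POL ⟨dpr S.toES (psi θ' φA φB) (c, d), isPrime_dpr hfS (psi_mem hfS hg')
              (psi_comm he h2 h3)⟩ (psi θ' φA φB) (psi_mem hfS hg') (c, d)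
              (psi_comm he h2 h3) rfl]
          exact hp2
        exact ⟨e1, e2⟩
    obtain ⟨P1θ, P1φ, P1φ'⟩ := EXTRACT θ₁ φ₁ φ₁' hg₁ hpe1
    obtain ⟨P2θ, P2φ, P2φ'⟩ := EXTRACT θ₂ φ₂ φ₂' hg₂ hpe2
    rw [rdom_mkT hfS hg₁, rdom_mkT hfS hg₂] at hcfg
    obtain ⟨μ, hμ, hμeq⟩ := CFGS.1 hcfg
    have hμU : μ = θ₁ ∪ θ₂ := prSub_eq_union_imp hfS hμ hg₁.hθ hg₂.hθ hμeq.symm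
    have hU1 : θ₁ ∪ θ₂ ∈ SS := by rw [← hμU]; exact hμ
    have hcθ : Config S.toES (rdom θ₁ ∪ rdom θ₂) := by
      rw [← rdom_union]; exact fam_cdom hfS hU1
    have hcθ' : Config S.toES (rran θ₁ ∪ rran θ₂) := by
      rw [← rran_union]; exact fam_cran hfS hU1
    have hU2 : φ₁ ∪ φ₂ ∈ SS := by
      refine hthin φ hg.hφ φ₁ hg₁.hφ φ₂ hg₂.hφ P1φ P2φ ?_
      rw [hg₁.dφ, hg₂.dφ]; exact hcθ
    have hU3 : φ₁' ∪ φ₂' ∈ SS := by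
      refine hthin φ' hg.hφ' φ₁' hg₁.hφ' φ₂' hg₂.hφ' P1φ' P2φ' ?_
      rw [hg₁.dφ', hg₂.dφ']; exact hcθ'
    have hgU : GoodT SS (θ₁ ∪ θ₂) (φ₁ ∪ φ₂) (φ₁' ∪ φ₂') := by
      refine ⟨hU1, hU2, hU3, ?_, ?_⟩
      · rw [rdom_union, rdom_union, hg₁.dφ, hg₂.dφ]
      · rw [rdom_union, rran_union, hg₁.dφ', hg₂.dφ']
    rw [← mkT_union hfS hg₁ hg₂ hgU]
    exact (liftFam_iff hfS).2 ⟨_, _, _, hgU, rfl⟩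
end

section
/- If σ : S → A is a ∼-strategy between essps, then S has a coherent extension: there is a function ext assigning to each θ : x ≅ y in the family of S and each extension x ⊆⁺ x' ∈ C(S) a member ext(θ, x') of the family with domain x', θ ⊆⁺ ext(θ, x'), such that (monotonicity) for x₁ ⊆⁺ x₂ ⊆⁺ x₃ and θ with domain x₁, ext(ext(θ, x₂), x₃) = ext(θ, x₃); and (stability) if θ₁ (with domain x₁) satisfies θ₁ ⊆⁻ θ₂ (θ₂ with domain x₂), x₁ ⊆⁺ x'₁, and {ext(θ₁, x'₁), θ₂} is compatible in the family (their union is contained in a member), then ext(θ₁, x'₁) ⊆ ext(θ₂, x₂ ∪ x'₁). -/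
set_option autoImplicit false
set_option maxHeartbeats 1000000

universe u

variable {E F G H : Type u}

/-- the domain of a ∼-strategy has a coherent extension. -/
theorem statement7 {SE AE : Type u} (S : ESP SE) (SS : Set (Rel2 SE))
    (A : ESP AE) (SA : Set (Rel2 AE)) (hSA : IsIsoFamily A.toES SA) (hpA : PolPres A SA)
    (σ : SE → AE) (hσ : IsSimStrategy S SS A SA σ) :
    ∃ ext : Rel2 SE → Set SE → Rel2 SE,
      (∀ θ ∈ SS, ∀ x', Config S.toES x' → PosSetExt S (rdom θ) x' →
        ext θ x' ∈ SS ∧ PosRelExt S θ (ext θ x') ∧ rdom (ext θ x') = x') ∧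
      (∀ θ ∈ SS, ∀ x₂ x₃, Config S.toES x₂ → Config S.toES x₃ →
        PosSetExt S (rdom θ) x₂ → PosSetExt S x₂ x₃ →
        ext (ext θ x₂) x₃ = ext θ x₃) ∧
      (∀ θ₁ ∈ SS, ∀ θ₂ ∈ SS, NegRelExt S θ₁ θ₂ → ∀ x₁', Config S.toES x₁' →
        PosSetExt S (rdom θ₁) x₁' → (∃ ψ ∈ SS, ext θ₁ x₁' ∪ θ₂ ⊆ ψ) →
        ext θ₁ x₁' ⊆ ext θ₂ (rdom θ₂ ∪ x₁')) := by
  classical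
  obtain ⟨-, -, hfam, hpolS, -, -, hthin⟩ := hσ
  obtain ⟨hbcd, hid, hinv, hcomp, hrestr, hextend⟩ := hfam
  set P : Rel2 SE → Set SE → Rel2 SE → Prop :=
    fun θ x' θ' => θ' ∈ SS ∧ θ ⊆ θ' ∧ rdom θ' = x' with hP
  set ext : Rel2 SE → Set SE → Rel2 SE := fun θ x' =>
    if h : ∃ θ', P θ x' θ' then h.choose else ∅ with hext
  have extSpec : ∀ θ ∈ SS, ∀ x', Config S.toES x' → rdom θ ⊆ x' → P θ x' (ext θ x') := by
    intro θ hθ x' hx' hsub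
    have h : ∃ θ', P θ x' θ' := by
      obtain ⟨θ', hθ', h1, h2⟩ := hextend θ hθ x' hx' hsub
      exact ⟨θ', hθ', h1, h2⟩
    simpa [hext, dif_pos h] using h.choose_spec
  have posOf : ∀ θ ∈ SS, ∀ θ' ∈ SS, θ ⊆ θ' → PosSetExt S (rdom θ) (rdom θ') →
      PosRelExt S θ θ' := by
    intro θ hθ θ' hθ' hsub hpos
    refine ⟨hsub, fun p hp hnp => ?_⟩
    have hbij := (hbcd θ' hθ').1
    have h1 : p.1 ∉ rdom θ := by
      rintro ⟨q, hq, hq1⟩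
      have h2 := (hbij q (hsub hq) p hp).1 hq1
      exact hnp (by rw [show p = q from Prod.ext hq1.symm h2.symm]; exact hq)
    have hp1 : S.pol p.1 = true := hpos.2 p.1 ⟨p, hp, rfl⟩ h1
    have hp2 : S.pol p.1 = S.pol p.2 := hpolS θ' hθ' p hp
    exact ⟨hp1, hp2 ▸ hp1⟩
  have uniq : ∀ θ ∈ SS, ∀ θ₁ ∈ SS, ∀ θ₂ ∈ SS, θ ⊆ θ₁ → θ ⊆ θ₂ → rdom θ₁ = rdom θ₂ →
      Config S.toES (rdom θ₁) → PosSetExt S (rdom θ) (rdom θ₁) → θ₁ = θ₂ := by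
    intro θ hθ θ₁ hθ₁ θ₂ hθ₂ hs₁ hs₂ hde hcfg hpos
    have pe₁ := posOf θ hθ θ₁ hθ₁ hs₁ hpos
    have pe₂ := posOf θ hθ θ₂ hθ₂ hs₂ (hde ▸ hpos)
    have hu : θ₁ ∪ θ₂ ∈ SS := by
      refine hthin θ hθ θ₁ hθ₁ θ₂ hθ₂ pe₁ pe₂ ?_
      rw [← hde, Set.union_self]; exact hcfg
    have hub := (hbcd _ hu).1
    have key : ∀ {α β : Rel2 SE}, α ⊆ θ₁ ∪ θ₂ → β ⊆ θ₁ ∪ θ₂ → rdom α = rdom β →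
        α ⊆ β := by
      intro α β hα hβ hd p hp
      have hpd : p.1 ∈ rdom β := hd ▸ ⟨p, hp, rfl⟩
      obtain ⟨q, hq, hq1⟩ := hpd
      have h2 := (hub p (hα hp) q (hβ hq)).1 hq1.symm
      rw [show p = q from Prod.ext hq1.symm h2]; exact hq
    exact Set.Subset.antisymm
      (key Set.subset_union_left Set.subset_union_right hde)
      (key Set.subset_union_right Set.subset_union_left hde.symm)
  refine ⟨ext, ?_, ?_, ?_⟩
  · intro θ hθ x' hx' hpos
    have s := extSpec θ hθ x' hx' hpos.1
    exact ⟨s.1, posOf θ hθ _ s.1 s.2.1 (by rw [s.2.2]; exact hpos), s.2.2⟩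
  · intro θ hθ x₂ x₃ hx₂ hx₃ h12 h23
    have s2 := extSpec θ hθ x₂ hx₂ h12.1
    have s3 := extSpec θ hθ x₃ hx₃ (h12.1.trans h23.1)
    have s23 := extSpec (ext θ x₂) s2.1 x₃ hx₃ (by rw [s2.2.2]; exact h23.1)
    have hpos : PosSetExt S (rdom θ) x₃ := by
      refine ⟨h12.1.trans h23.1, fun e he hne => ?_⟩
      by_cases h : e ∈ x₂
      · exact h12.2 e h hne
      · exact h23.2 e he h
    refine uniq θ hθ _ s23.1 _ s3.1 (s2.2.1.trans s23.2.1) s3.2.1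
      (s23.2.2.trans s3.2.2.symm) ?_ ?_
    · rw [s23.2.2]; exact hx₃
    · rw [s23.2.2]; exact hpos
  · rintro θ₁ hθ₁ θ₂ hθ₂ hneg x₁' hx₁' hpos ⟨ψ, hψ, hsubψ⟩
    have s1 := extSpec θ₁ hθ₁ x₁' hx₁' hpos.1
    have hφψ : ext θ₁ x₁' ⊆ ψ := Set.subset_union_left.trans hsubψ
    have hθ₂ψ : θ₂ ⊆ ψ := Set.subset_union_right.trans hsubψ
    have cθ₂ : Config S.toES (rdom θ₂) := (hbcd θ₂ hθ₂).2.1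
    have cψ : Config S.toES (rdom ψ) := (hbcd ψ hψ).2.1
    have hxsub : rdom θ₂ ∪ x₁' ⊆ rdom ψ := by
      refine Set.union_subset (Set.image_mono hθ₂ψ) ?_
      rw [← s1.2.2]; exact Set.image_mono hφψ
    have hxcfg : Config S.toES (rdom θ₂ ∪ x₁') := by
      constructor
      · exact S.con_mono hxsub cψ.1
      · rintro e (he | he) e' hle
        · exact Or.inl (cθ₂.2 he hle)
        · exact Or.inr (hx₁'.2 he hle)
    have hψ'mem : relRestrict ψ (rdom θ₂ ∪ x₁') ∈ SS := hrestr ψ hψ _ hxcfg hxsub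
    have hψ'dom : rdom (relRestrict ψ (rdom θ₂ ∪ x₁')) = rdom θ₂ ∪ x₁' := by
      apply Set.Subset.antisymm
      · rintro e ⟨p, ⟨hp, hpx⟩, rfl⟩; exact hpx
      · intro e he
        obtain ⟨p, hp, hp1⟩ := hxsub he
        exact ⟨p, ⟨hp, hp1 ▸ he⟩, hp1⟩
    have hθ₂ψ' : θ₂ ⊆ relRestrict ψ (rdom θ₂ ∪ x₁') := by
      intro p hp; exact ⟨hθ₂ψ hp, Or.inl ⟨p, hp, rfl⟩⟩
    have hφψ' : ext θ₁ x₁' ⊆ relRestrict ψ (rdom θ₂ ∪ x₁') := by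
      intro p hp; exact ⟨hφψ hp, Or.inr (s1.2.2 ▸ ⟨p, hp, rfl⟩)⟩
    have s2 := extSpec θ₂ hθ₂ _ hxcfg Set.subset_union_left
    have hpos2 : PosSetExt S (rdom θ₂) (rdom θ₂ ∪ x₁') := by
      refine ⟨Set.subset_union_left, fun e he hne => ?_⟩
      rcases he with he | he
      · exact absurd he hne
      · refine hpos.2 e he (fun h => hne ?_)
        exact Set.image_mono hneg.1 h
    have heq : ext θ₂ (rdom θ₂ ∪ x₁') = relRestrict ψ (rdom θ₂ ∪ x₁') := by
      refine uniq θ₂ hθ₂ _ s2.1 _ hψ'mem s2.2.1 hθ₂ψ' (s2.2.2.trans hψ'dom.symm) ?_ ?_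
      · rw [s2.2.2]; exact hxcfg
      · rw [s2.2.2]; exact hpos2
    rw [heq]; exact hφψ'
end
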